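/- arXiv:1405.7709 — 7 statements merged into one kernel-verified Lean document; each statement's English description precedes it below -/
import Mathlib

section
/- Let n ∈ ℕ and let x = (x^i_j) and y = (y^i_j) be Boolean vectors indexed by P_n = {(i,j) : 1 ≤ i,j ≤ n, i ≠ j}. Construct full preference lists from x and y as follows: the list of woman w_i consists of all m_j with x^i_j = 1 (sorted by j), followed by m_i, followed by all remaining men (sorted by index); the list of man m_j consists of all w_i with y^i_j = 1 (sorted by i), followed by w_j, followed by all remaining women (sorted by index). Then the perfect marriage μ_id, which marries w_i to m_i for every i, is stable with respect to these preference lists if and only if there is no (i,j) ∈ P_n with x^i_j = y^i_j = 1. -/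
/-- Stability of a perfect marriage in a marriage market with full preference lists.
Women and men are both indexed by `Fin n` (index `i` is `w_{i+1}` resp. `m_{j+1}` in
1-indexed notation); `μ i` is the man married to woman `i`.  `wR i j` is woman `i`'s
rank of man `j` (lower rank = more preferred) and `mR j i` is man `j`'s rank of
woman `i`.  The marriage is stable when it is a bijection and there is no blocking
pair: no woman `i` and man `μ i'` (married to woman `i'`) such that woman `i`
prefers `μ i'` over her spouse `μ i` and man `μ i'` prefers `i` over his spouse `i'`. -/
def StableFull (n : ℕ) (wR mR : ℕ → ℕ → ℕ) (μ : Fin n → Fin n) : Prop :=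
  Function.Bijective μ ∧
    ∀ i i' : Fin n,
      ¬(wR i.val (μ i').val < wR i.val (μ i).val ∧
        mR (μ i').val i.val < mR (μ i').val i'.val)

/-- Woman `i`'s ranking of man `j` built from the Boolean vector `x` (0-indexed):
first all men `j ≠ i` with `x i j = 1`, sorted by `j`; then `m_i`; then all
remaining men, sorted by `j`.  (Lower rank = more preferred.) -/
def flatWRank (n : ℕ) (x : ℕ → ℕ → Bool) (i j : ℕ) : ℕ :=
  if j ≠ i ∧ x i j = true then j
  else if j = i then n + j
  else 2 * n + j

/-- Man `j`'s ranking of woman `i` built from the Boolean vector `y` (0-indexed):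
first all women `i ≠ j` with `y i j = 1`, sorted by `i`; then `w_j`; then all
remaining women, sorted by `i`. -/
def flatMRank (n : ℕ) (y : ℕ → ℕ → Bool) (j i : ℕ) : ℕ :=
  if i ≠ j ∧ y i j = true then i
  else if i = j then n + i
  else 2 * n + i

/-- The identity marriage `μ_id` (marrying `w_i` to `m_i` for every `i`) is stable
with respect to the preference lists constructed from `x` and `y` if and only if
there is no pair `(i, j)` with `i ≠ j` and `x^i_j = y^i_j = 1`. -/
theorem identity_stable_iff_disjoint (n : ℕ) (x y : ℕ → ℕ → Bool) :
    StableFull n (flatWRank n x) (flatMRank n y) (fun i => i) ↔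
      ¬∃ i j : Fin n, i ≠ j ∧ x i.val j.val = true ∧ y i.val j.val = true := by
  have hkey : ∀ i i' : Fin n,
      (flatWRank n x i.val i'.val < flatWRank n x i.val i.val ∧
        flatMRank n y i'.val i.val < flatMRank n y i'.val i'.val) ↔
      (i ≠ i' ∧ x i.val i'.val = true ∧ y i.val i'.val = true) := by
    intro i i'
    have hi := i.isLt
    have hi' := i'.isLt
    have hw1 : flatWRank n x i.val i.val = n + i.val := by
      simp [flatWRank]
    have hm1 : flatMRank n y i'.val i'.val = n + i'.val := by
      simp [flatMRank]
    constructor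
    · rintro ⟨h1, h2⟩
      rw [hw1] at h1
      by_cases hne : (i'.val ≠ i.val ∧ x i.val i'.val = true)
      · refine ⟨?_, hne.2, ?_⟩
        · exact fun h => hne.1 (by rw [h])
        · rw [hm1] at h2
          by_cases hne2 : (i.val ≠ i'.val ∧ y i.val i'.val = true)
          · exact hne2.2
          · exfalso
            unfold flatMRank at h2
            rw [if_neg hne2] at h2
            split at h2 <;> omega
      · exfalso
        unfold flatWRank at h1
        rw [if_neg hne] at h1
        split at h1 <;> omega
    · rintro ⟨hne, hx, hy⟩
      have hne' : i.val ≠ i'.val := fun h => hne (Fin.ext h)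
      constructor
      · rw [hw1]
        unfold flatWRank
        rw [if_pos ⟨fun h => hne' h.symm, hx⟩]
        omega
      · rw [hm1]
        unfold flatMRank
        rw [if_pos ⟨hne', hy⟩]
        omega
  constructor
  · rintro ⟨_, hstab⟩ ⟨i, j, hne, hx, hy⟩
    exact hstab i j ((hkey i j).2 ⟨hne, hx, hy⟩)
  · intro h
    refine ⟨Function.bijective_id, fun i i' hc => ?_⟩
    obtain ⟨hne, hx, hy⟩ := (hkey i i').1 hc
    exact h ⟨i, i', hne, hx, hy⟩
end

section
/- Let (W, M, ≻) be a marriage market with full preference lists and let μ be a stable perfect marriage such that for every stable perfect marriage μ', every woman w weakly prefers μ'(w) over μ(w) and every man m weakly prefers μ'(m) over μ(m) (i.e., μ is both the W-worst and the M-worst stable marriage). Then μ is the unique stable perfect marriage. -/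
/-- Stability of a perfect marriage `μ` (a bijection between women and men, both
indexed by `Fin n`) in a marriage market with full preference lists, where
`wR w m` is woman `w`'s rank of man `m` (lower rank = more preferred) and
`mR m w` is man `m`'s rank of woman `w`.  `μ` is stable when there is no
blocking pair: no woman `w` and man `m` each of whom strictly prefers the
other over their own spouse. -/
def StableEq (n : ℕ) (wR mR : Fin n → Fin n → ℕ) (μ : Fin n ≃ Fin n) : Prop :=
  ¬∃ (w m : Fin n), wR w m < wR w (μ w) ∧ mR m w < mR m (μ.symm m)

/-- If a stable perfect marriage `μ` is both the `W`-worst stable marriage (every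
woman weakly prefers her spouse in any stable marriage `μ'` over her spouse in `μ`)
and the `M`-worst stable marriage (every man weakly prefers his spouse in any
stable marriage `μ'` over his spouse in `μ`), then `μ` is the unique stable
perfect marriage.  The injectivity hypotheses say that the ranks encode strict
total orders. -/
theorem worst_for_both_sides_unique (n : ℕ) (wR mR : Fin n → Fin n → ℕ)
    (hw : ∀ w, Function.Injective (wR w)) (hm : ∀ m, Function.Injective (mR m))
    (μ : Fin n ≃ Fin n) (hμ : StableEq n wR mR μ)
    (hworst : ∀ μ' : Fin n ≃ Fin n, StableEq n wR mR μ' →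
        (∀ w, wR w (μ' w) ≤ wR w (μ w)) ∧ (∀ m, mR m (μ'.symm m) ≤ mR m (μ.symm m))) :
    ∀ μ' : Fin n ≃ Fin n, StableEq n wR mR μ' → μ' = μ := by
  intro μ' hμ'
  by_contra hne
  obtain ⟨w, hwne⟩ : ∃ w, μ' w ≠ μ w := by
    by_contra h
    push_neg at h
    exact hne (Equiv.ext h)
  obtain ⟨h1, h2⟩ := hworst μ' hμ'
  set m := μ' w with hmdef
  have hsymm : μ'.symm m = w := μ'.symm_apply_apply w
  have hwlt : wR w m < wR w (μ w) :=
    lt_of_le_of_ne (h1 w) (fun h => hwne (hw w h))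
  have hne2 : w ≠ μ.symm m := by
    intro h
    exact hwne (by rw [h, Equiv.apply_symm_apply])
  have hmlt : mR m w < mR m (μ.symm m) := by
    have := h2 m
    rw [hsymm] at this
    exact lt_of_le_of_ne this (fun h => hne2 (hm m h))
  exact hμ ⟨w, m, hwlt, hmlt⟩
end

section
/- Consider the three-tier construction with parameter δ and Boolean vectors x, y, and suppose the instance is disjoint, i.e., no pair (i, j) has x^i_j = y^i_j = 1. Then the perfect marriage μ₁ = {(w_{i+n/2}, m_i) : 1 ≤ i ≤ n/2} ∪ {(w_i, m_{i+n/2}) : 1 ≤ i ≤ n/2} is the unique stable marriage for these preference lists. -/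
/-- Women's ranks in the three-tier construction, 0-indexed, with `n = 2 * k` and
`h = δn/2`: women/men with index `< h` are high, those in `[h, k)` are mid, and
those in `[k, n)` are low.  A low woman ranks the men in index order.  A mid woman
ranks the low men first (in index order) and then `m_1, …, m_{n/2}` (in index
order).  A high woman `i` ranks first the high men `j` with `x i j = 1`, then the
low men, then the mid men, then the high men `j` with `x i j = 0`, each group
sorted by index.  (Lower rank = more preferred.) -/
def tierWRank (n k h : ℕ) (x : ℕ → ℕ → Bool) (i j : ℕ) : ℕ :=
  if k ≤ i then j
  else if h ≤ i then (if k ≤ j then j - k else j + k)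
  else (if j < h ∧ x i j = true then 0
        else if k ≤ j then 1
        else if h ≤ j then 2
        else 3) * n + j

/-- Men's ranks in the three-tier construction, symmetric to `tierWRank`: a high
man `j` ranks first the high women `i` with `y i j = 1`, then the low women, then
the mid women, then the remaining high women, each group sorted by index. -/
def tierMRank (n k h : ℕ) (y : ℕ → ℕ → Bool) (j i : ℕ) : ℕ :=
  if k ≤ j then i
  else if h ≤ j then (if k ≤ i then i - k else i + k)
  else (if i < h ∧ y i j = true then 0
        else if k ≤ i then 1
        else if h ≤ i then 2
        else 3) * n + i

/-- The perfect marriage `μ₁` (0-indexed, with `n = 2 * k`): woman `i` marries man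
`(i + k) mod n`, i.e. `w_i ↔ m_{i + n/2}` for `1 ≤ i ≤ n/2` and `w_{i + n/2} ↔ m_i`
for `1 ≤ i ≤ n/2` in the 1-indexed notation of the paper. -/
def muOne (n k : ℕ) : Fin n → Fin n :=
  fun i => ⟨(i.val + k) % n, Nat.mod_lt _ (Nat.lt_of_le_of_lt (Nat.zero_le _) i.isLt)⟩

set_option maxHeartbeats 2000000 in
theorem tier_noblock (n k h : ℕ) (x y : ℕ → ℕ → Bool)
    (hn : n = 2 * k) (hhk : h ≤ k)
    (hdisj' : ∀ i j, i < h → j < h → x i j = true → y i j = false)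
    (a b : ℕ) (ha : a < n) (hb : b < n) :
    ¬(tierWRank n k h x a ((b+k) % n) < tierWRank n k h x a ((a+k) % n) ∧
      tierMRank n k h y ((b+k) % n) a < tierMRank n k h y ((b+k) % n) b) := by
  have hmod : ∀ c, c < n → (c + k) % n = if c < k then c + k else c - k := by
    intro c hc
    split_ifs with hck
    · exact Nat.mod_eq_of_lt (by omega)
    · rw [Nat.mod_eq_sub_mod (by omega), Nat.mod_eq_of_lt (by omega)]; omega
  rw [hmod a ha, hmod b hb]
  unfold tierWRank tierMRank
  split_ifs <;>
    first
    | omega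
    | (obtain ⟨h1, h2⟩ := ‹_ ∧ x a _ = true›; omega)
    | { obtain ⟨h1, h2⟩ := ‹_ ∧ x a _ = true›
        obtain ⟨h3, h4⟩ := ‹a < h ∧ y a _ = true›
        rw [hdisj' a _ h3 h1 h2] at h4
        exact absurd h4 (by simp) }

set_option maxHeartbeats 2000000 in
theorem tier_uniq (n k h : ℕ) (x y : ℕ → ℕ → Bool)
    (hn : n = 2 * k) (hhk : h ≤ k)
    (hdisj' : ∀ i j, i < h → j < h → x i j = true → y i j = false)
    (μ : Fin n → Fin n) (hbij : Function.Bijective μ)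
    (hstab : ∀ i i' : Fin n,
      ¬(tierWRank n k h x i.val (μ i').val < tierWRank n k h x i.val (μ i).val ∧
        tierMRank n k h y (μ i').val i.val < tierMRank n k h y (μ i').val i'.val)) :
    ∀ a, ∀ ha : a < n, (μ ⟨a, ha⟩).val = (a + k) % n := by
  have hmod : ∀ c, c < n → (c + k) % n = if c < k then c + k else c - k := by
    intro c hc
    split_ifs with hck
    · exact Nat.mod_eq_of_lt (by omega)
    · rw [Nat.mod_eq_sub_mod (by omega), Nat.mod_eq_of_lt (by omega)]; omega
  intro a
  induction a using Nat.strong_induction_on with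
  | _ a ih =>
  intro ha
  rw [hmod a ha]
  set v := (μ ⟨a, ha⟩).val with hv
  have hvn : v < n := (μ ⟨a, ha⟩).isLt
  have hprev : ∀ b, b < a → ∀ hb : b < n, (μ ⟨b, hb⟩).val = if b < k then b + k else b - k := by
    intro b hba hb; rw [ih b hba hb, hmod b hb]
  have hvne : ∀ b, b < a → v ≠ (if b < k then b + k else b - k) := by
    intro b hba he
    have hb : b < n := by omega
    have : μ ⟨a, ha⟩ = μ ⟨b, hb⟩ := Fin.ext (by rw [hprev b hba hb, ← hv]; exact he)
    have := hbij.1 this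
    simp only [Fin.mk.injEq] at this
    omega
  by_contra hne
  -- partner finder
  have partner : ∀ t, ∀ ht : t < n, v ≠ t → (∀ b, b < a → t ≠ (if b < k then b + k else b - k)) →
      ∃ c, ∃ hc : c < n, a < c ∧ (μ ⟨c, hc⟩).val = t := by
    intro t ht hvt hprevt
    obtain ⟨c, hc⟩ := hbij.2 ⟨t, ht⟩
    have hceq : (μ ⟨c.val, c.isLt⟩).val = t := by rw [Fin.eta, hc]
    refine ⟨c.val, c.isLt, ?_, hceq⟩
    rcases lt_trichotomy c.val a with hca | hca | hca
    · exact absurd (hceq.symm.trans (hprev c.val hca c.isLt)) (hprevt c.val hca)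
    · exfalso; apply hvt; rw [hv, show (⟨a, ha⟩ : Fin n) = ⟨c.val, c.isLt⟩ from Fin.ext hca.symm, hceq]
    · exact hca
  rcases Nat.lt_or_ge a k with hak | hak
  · -- a < k : target a + k
    have hne' : v ≠ a + k := by rwa [if_pos hak] at hne
    -- v not in [k, a+k)
    have hvrange : v < k ∨ a + k < v := by
      by_contra hcon
      push_neg at hcon
      have := hvne (v - k) (by omega)
      rw [if_pos (by omega)] at this
      omega
    by_cases hhigh : a < h ∧ v < h ∧ x a v = true
    · -- disjoint case: find a low woman with big spouse
      obtain ⟨hah, hvh, hxav⟩ := hhigh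
      have hyav : y a v = false := hdisj' a v hah hvh hxav
      have hk0 : 0 < k := by omega
      have hex : ∃ c, ∃ hc : c < n, k ≤ c ∧ v < (μ ⟨c, hc⟩).val := by
        by_contra hall
        push_neg at hall
        have hmaps : ∀ c : Fin n, c ∈ Finset.Ici (⟨k, by omega⟩ : Fin n) →
            μ c ∈ Finset.Iio (⟨v, by omega⟩ : Fin n) := by
          intro c hcmem
          rw [Finset.mem_Ici, Fin.le_def] at hcmem
          simp only [Fin.val_mk] at hcmem
          rw [Finset.mem_Iio, Fin.lt_def]
          simp only [Fin.val_mk]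
          have h1 : (μ c).val ≤ v := by
            have := hall c.val c.isLt hcmem
            rwa [Fin.eta] at this
          rcases lt_or_eq_of_le h1 with h2 | h2
          · exact h2
          · exfalso
            have hce : c = ⟨a, ha⟩ := hbij.1 (Fin.ext (h2.trans hv))
            have hca : c.val = a := by simpa using congrArg Fin.val hce
            omega
        have hcard := Finset.card_le_card_of_injOn μ hmaps (hbij.1.injOn)
        rw [Fin.card_Ici, Fin.card_Iio] at hcard
        simp only [Fin.val_mk] at hcard
        omega
      obtain ⟨c, hcn, hck, hcv⟩ := hex
      -- blocking pair (woman c, man v = μ(a)) i.e. hstab ⟨c⟩ ⟨a⟩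
      refine hstab ⟨c, hcn⟩ ⟨a, ha⟩ ⟨?_, ?_⟩
      · show tierWRank n k h x c (μ ⟨a, ha⟩).val < tierWRank n k h x c (μ ⟨c, hcn⟩).val
        rw [← hv]
        unfold tierWRank
        split_ifs <;>
          first
          | omega
          | (obtain ⟨h1, h2⟩ := ‹_ ∧ x _ _ = true›; omega)
      · show tierMRank n k h y (μ ⟨a, ha⟩).val c < tierMRank n k h y (μ ⟨a, ha⟩).val a
        rw [← hv]
        unfold tierMRank
        split_ifs <;>
          first
          | omega
          | (obtain ⟨h1, h2⟩ := ‹_ ∧ y _ _ = true›;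
             first | omega | (rw [hyav] at h2; exact absurd h2 (by simp)))
    · -- normal case: blocking with man a+k
      obtain ⟨c, hcn, hca, hcv⟩ := partner (a + k) (by omega) hne' (by
        intro b hba
        split_ifs with hbk
        · omega
        · omega)
      refine hstab ⟨a, ha⟩ ⟨c, hcn⟩ ⟨?_, ?_⟩
      · show tierWRank n k h x a (μ ⟨c, hcn⟩).val < tierWRank n k h x a (μ ⟨a, ha⟩).val
        rw [hcv, ← hv]
        unfold tierWRank
        split_ifs <;>
          first
          | omega
          | (obtain ⟨h1, h2⟩ := ‹_ ∧ x _ _ = true›;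
             first | omega | exact absurd (show a < h ∧ v < h ∧ x a v = true from
               ⟨by omega, by omega, h2⟩) hhigh)
      · show tierMRank n k h y (μ ⟨c, hcn⟩).val a < tierMRank n k h y (μ ⟨c, hcn⟩).val c
        rw [hcv]
        unfold tierMRank
        split_ifs <;> omega
  · -- a ≥ k : target a - k
    have hne' : v ≠ a - k := by rwa [if_neg (by omega)] at hne
    have hvk : v < k := by
      by_contra hcon
      have := hvne (v - k) (by omega)
      rw [if_pos (by omega)] at this
      omega
    have hvgt : a - k < v := by
      rcases Nat.lt_or_ge (a - k) v with h1 | h1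
      · exact h1
      · exfalso
        have h2 : v < a - k := by omega
        have := hvne (v + k) (by omega)
        rw [if_neg (by omega)] at this
        omega
    obtain ⟨c, hcn, hca, hcv⟩ := partner (a - k) (by omega) hne' (by
      intro b hba
      split_ifs with hbk <;> omega)
    refine hstab ⟨a, ha⟩ ⟨c, hcn⟩ ⟨?_, ?_⟩
    · show tierWRank n k h x a (μ ⟨c, hcn⟩).val < tierWRank n k h x a (μ ⟨a, ha⟩).val
      rw [hcv, ← hv]
      unfold tierWRank
      split_ifs <;> omega
    · show tierMRank n k h y (μ ⟨c, hcn⟩).val a < tierMRank n k h y (μ ⟨c, hcn⟩).val c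
      rw [hcv]
      unfold tierMRank
      split_ifs <;>
        first
        | omega
        | (obtain ⟨h1, h2⟩ := ‹_ ∧ y _ _ = true›; omega)

/-- In the three-tier construction with a disjoint instance (no pair `(i, j)` of
high indices has `x^i_j = y^i_j = 1`), the marriage `μ₁` is the unique stable
marriage.  Here `n = 2 * k`, `0 < δ ≤ 1`, and `h = δn/2` (so `h ≤ k`). -/
theorem tier_disjoint_unique_stable (n k h : ℕ) (δ : ℝ) (x y : ℕ → ℕ → Bool)
    (hn : n = 2 * k) (hδ0 : 0 < δ) (hδ1 : δ ≤ 1)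
    (hh : (h : ℝ) = δ * n / 2) (hhk : h ≤ k)
    (hdisj : ¬∃ i j : ℕ, i < h ∧ j < h ∧ x i j = true ∧ y i j = true) :
    StableFull n (tierWRank n k h x) (tierMRank n k h y) (muOne n k) ∧
      ∀ μ : Fin n → Fin n,
        StableFull n (tierWRank n k h x) (tierMRank n k h y) μ → μ = muOne n k := by
  have hdisj' : ∀ i j, i < h → j < h → x i j = true → y i j = false := by
    intro i j hi hj hx
    by_contra hy
    exact hdisj ⟨i, j, hi, hj, hx, by simpa using hy⟩
  have hmod : ∀ c, c < n → (c + k) % n = if c < k then c + k else c - k := by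
    intro c hc
    split_ifs with hck
    · exact Nat.mod_eq_of_lt (by omega)
    · rw [Nat.mod_eq_sub_mod (by omega), Nat.mod_eq_of_lt (by omega)]; omega
  constructor
  · constructor
    · refine Function.Involutive.bijective ?_
      intro i
      apply Fin.ext
      show ((i.val + k) % n + k) % n = i.val
      have hi := i.isLt
      rw [hmod _ i.isLt]
      split_ifs with h1
      · rw [hmod _ (by omega), if_neg (by omega)]; omega
      · rw [hmod _ (by omega), if_pos (by omega)]; omega
    · intro i i'
      exact tier_noblock n k h x y hn hhk hdisj' i.val i'.val i.isLt i'.isLt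
  · rintro μ ⟨hbij, hstab⟩
    funext i
    apply Fin.ext
    exact tier_uniq n k h x y hn hhk hdisj' μ hbij hstab i.val i.isLt
end

section
/- Consider the three-tier construction with parameter δ and Boolean vectors x, y, and suppose the instance is uniquely intersecting: there is exactly one pair (α, β) with x^α_β = y^α_β = 1. Then the perfect marriage μ₀ = {(w_α, m_β)} ∪ {(w_i, m_{i+n/2}) : i < α} ∪ {(w_{i+n/2}, m_i) : i < β} ∪ {(w_i, m_{i+n/2−1}) : α < i ≤ n/2} ∪ {(w_{i+n/2−1}, m_i) : β < i ≤ n/2} ∪ {(w_n, m_n)} is the unique stable marriage for these preference lists. -/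
/-- The 0-indexed man that the marriage `μ₀` assigns to the 0-indexed woman `u`,
where `n = 2 * k` and `a = α - 1`, `b = β - 1` are the 0-indexed intersection
indices.  In the 1-indexed notation of the paper: `w_α ↔ m_β`; `w_i ↔ m_{i + n/2}`
for `i < α`; `w_{i + n/2} ↔ m_i` for `i < β`; `w_i ↔ m_{i + n/2 - 1}` for
`α < i ≤ n/2`; `w_{i + n/2 - 1} ↔ m_i` for `β < i ≤ n/2`; and `w_n ↔ m_n`. -/
def muZeroVal (k a b u : ℕ) : ℕ :=
  if u = a then b
  else if u < a then u + k
  else if u < k then u + k - 1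
  else if u < k + b then u - k
  else if u + 2 ≤ 2 * k then u + 1 - k
  else 2 * k - 1

/-- The perfect marriage `μ₀` as a map `Fin n → Fin n` (for `n = 2 * k` and
`a, b < n/2` the reduction modulo `n` is the identity on all values taken). -/
def muZero (n k a b : ℕ) : Fin n → Fin n :=
  fun u => ⟨muZeroVal k a b u.val % n,
    Nat.mod_lt _ (Nat.lt_of_le_of_lt (Nat.zero_le _) u.isLt)⟩


section helpers
variable {n k h : ℕ} {x : ℕ → ℕ → Bool} {i j : ℕ}

lemma wR_low (hi : k ≤ i) : tierWRank n k h x i j = j := by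
  unfold tierWRank; rw [if_pos hi]

lemma wR_mid_low (hh : h ≤ i) (hi : i < k) (hj : k ≤ j) :
    tierWRank n k h x i j = j - k := by
  unfold tierWRank; rw [if_neg (by omega), if_pos hh, if_pos hj]

lemma wR_mid_top (hh : h ≤ i) (hi : i < k) (hj : j < k) :
    tierWRank n k h x i j = j + k := by
  unfold tierWRank; rw [if_neg (by omega), if_pos hh, if_neg (by omega)]

lemma wR_high_hit (hhk : h ≤ k) (hi : i < h) (hj : j < h) (hx : x i j = true) :
    tierWRank n k h x i j = j := by
  unfold tierWRank; rw [if_neg (by omega), if_neg (by omega), if_pos ⟨hj, hx⟩]; omega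

lemma wR_high_low (hhk : h ≤ k) (hi : i < h) (hj : k ≤ j) :
    tierWRank n k h x i j = n + j := by
  unfold tierWRank
  rw [if_neg (by omega), if_neg (by omega), if_neg (by omega), if_pos hj]; omega

lemma wR_high_mid (hhk : h ≤ k) (hi : i < h) (hj : h ≤ j) (hj' : j < k) :
    tierWRank n k h x i j = 2 * n + j := by
  unfold tierWRank
  rw [if_neg (by omega), if_neg (by omega), if_neg (by omega), if_neg (by omega), if_pos hj]

lemma wR_high_miss (hhk : h ≤ k) (hi : i < h) (hj : j < h) (hx : x i j = false) :
    tierWRank n k h x i j = 3 * n + j := by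
  unfold tierWRank
  rw [if_neg (by omega), if_neg (by omega), if_neg (by simp [hx]), if_neg (by omega),
    if_neg (by omega)]

lemma mR_low (hj : k ≤ j) : tierMRank n k h x j i = i := by
  unfold tierMRank; rw [if_pos hj]

lemma mR_mid_low (hh : h ≤ j) (hj : j < k) (hi : k ≤ i) :
    tierMRank n k h x j i = i - k := by
  unfold tierMRank; rw [if_neg (by omega), if_pos hh, if_pos hi]

lemma mR_mid_top (hh : h ≤ j) (hj : j < k) (hi : i < k) :
    tierMRank n k h x j i = i + k := by
  unfold tierMRank; rw [if_neg (by omega), if_pos hh, if_neg (by omega)]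

lemma mR_high_hit (hhk : h ≤ k) (hj : j < h) (hi : i < h) (hy : x i j = true) :
    tierMRank n k h x j i = i := by
  unfold tierMRank; rw [if_neg (by omega), if_neg (by omega), if_pos ⟨hi, hy⟩]; omega

lemma mR_high_low (hhk : h ≤ k) (hj : j < h) (hi : k ≤ i) :
    tierMRank n k h x j i = n + i := by
  unfold tierMRank
  rw [if_neg (by omega), if_neg (by omega), if_neg (by omega), if_pos hi]; omega

lemma mR_high_mid (hhk : h ≤ k) (hj : j < h) (hi : h ≤ i) (hi' : i < k) :
    tierMRank n k h x j i = 2 * n + i := by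
  unfold tierMRank
  rw [if_neg (by omega), if_neg (by omega), if_neg (by omega), if_neg (by omega), if_pos hi]

lemma mR_high_miss (hhk : h ≤ k) (hj : j < h) (hi : i < h) (hy : x i j = false) :
    tierMRank n k h x j i = 3 * n + i := by
  unfold tierMRank
  rw [if_neg (by omega), if_neg (by omega), if_neg (by simp [hy]), if_neg (by omega),
    if_neg (by omega)]

end helpers

lemma muZeroVal_region (k a b u : ℕ) (hak : a < k) (hbk : b < k) (hu : u < 2 * k) :
    (u = a ∧ muZeroVal k a b u = b) ∨ (u < a ∧ muZeroVal k a b u = u + k) ∨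
    (a < u ∧ u < k ∧ muZeroVal k a b u = u + k - 1) ∨
    (k ≤ u ∧ u < k + b ∧ muZeroVal k a b u = u - k) ∨
    (k + b ≤ u ∧ u + 2 ≤ 2 * k ∧ muZeroVal k a b u = u + 1 - k) ∨
    (u = 2 * k - 1 ∧ muZeroVal k a b u = 2 * k - 1) := by
  unfold muZeroVal; split_ifs <;> omega

lemma muZeroVal_lt (k a b u : ℕ) (hak : a < k) (hbk : b < k) (hu : u < 2 * k) :
    muZeroVal k a b u < 2 * k := by
  unfold muZeroVal; split_ifs <;> omega

lemma muZeroVal_inv (k a b u : ℕ) (hak : a < k) (hbk : b < k) (hu : u < 2 * k) :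
    muZeroVal k b a (muZeroVal k a b u) = u := by
  rcases muZeroVal_region k a b u hak hbk hu with ⟨h1, h2⟩|⟨h1, h2⟩|⟨h1, h1', h2⟩|⟨h1, h1', h2⟩|⟨h1, h1', h2⟩|⟨h1, h2⟩ <;>
    rw [h2] <;> unfold muZeroVal <;> split_ifs <;> omega


set_option linter.unusedVariables false
set_option maxHeartbeats 4000000 in
lemma tc0 (n k h a b s v u u' xv xs yv yv' : ℕ)
    (hn : n = 2*k) (hhk : h ≤ k) (ha : a < h) (hb : b < h)
    (hu : u < n) (hu' : u' < n)
    (hP : (u = a ∧ s = b) ∨ (u < a ∧ s = u + k) ∨ (a < u ∧ u < k ∧ s = u + k - 1) ∨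
          (k ≤ u ∧ u < k + b ∧ s = u - k) ∨ (k + b ≤ u ∧ u + 2 ≤ 2*k ∧ s = u + 1 - k) ∨
          (u = 2*k - 1 ∧ s = 2*k - 1))
    (hP' : (u' = a ∧ v = b))
    (hxs : u = a → xs = 1)
    (hyv' : u' = a → yv' = 1)
    (hun : u < h → v < h → xv = 1 → yv = 1 → u = a ∧ v = b) :
    ¬ ((if k ≤ u then v else if h ≤ u then (if k ≤ v then v - k else v + k)
         else (if v < h ∧ xv = 1 then 0 else if k ≤ v then 1 else if h ≤ v then 2 else 3) * n + v)
       < (if k ≤ u then s else if h ≤ u then (if k ≤ s then s - k else s + k)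
         else (if s < h ∧ xs = 1 then 0 else if k ≤ s then 1 else if h ≤ s then 2 else 3) * n + s)
      ∧ (if k ≤ v then u else if h ≤ v then (if k ≤ u then u - k else u + k)
         else (if u < h ∧ yv = 1 then 0 else if k ≤ u then 1 else if h ≤ u then 2 else 3) * n + u)
       < (if k ≤ v then u' else if h ≤ v then (if k ≤ u' then u' - k else u' + k)
         else (if u' < h ∧ yv' = 1 then 0 else if k ≤ u' then 1 else if h ≤ u' then 2 else 3) * n + u')) := by
  obtain ⟨g1, g2⟩ := hP'
  subst g2
  split_ifs <;> omega

set_option maxHeartbeats 4000000 in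
lemma tc1 (n k h a b s v u u' xv xs yv yv' : ℕ)
    (hn : n = 2*k) (hhk : h ≤ k) (ha : a < h) (hb : b < h)
    (hu : u < n) (hu' : u' < n)
    (hP : (u = a ∧ s = b) ∨ (u < a ∧ s = u + k) ∨ (a < u ∧ u < k ∧ s = u + k - 1) ∨
          (k ≤ u ∧ u < k + b ∧ s = u - k) ∨ (k + b ≤ u ∧ u + 2 ≤ 2*k ∧ s = u + 1 - k) ∨
          (u = 2*k - 1 ∧ s = 2*k - 1))
    (hP' : (u' < a ∧ v = u' + k))
    (hxs : u = a → xs = 1)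
    (hyv' : u' = a → yv' = 1)
    (hun : u < h → v < h → xv = 1 → yv = 1 → u = a ∧ v = b) :
    ¬ ((if k ≤ u then v else if h ≤ u then (if k ≤ v then v - k else v + k)
         else (if v < h ∧ xv = 1 then 0 else if k ≤ v then 1 else if h ≤ v then 2 else 3) * n + v)
       < (if k ≤ u then s else if h ≤ u then (if k ≤ s then s - k else s + k)
         else (if s < h ∧ xs = 1 then 0 else if k ≤ s then 1 else if h ≤ s then 2 else 3) * n + s)
      ∧ (if k ≤ v then u else if h ≤ v then (if k ≤ u then u - k else u + k)
         else (if u < h ∧ yv = 1 then 0 else if k ≤ u then 1 else if h ≤ u then 2 else 3) * n + u)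
       < (if k ≤ v then u' else if h ≤ v then (if k ≤ u' then u' - k else u' + k)
         else (if u' < h ∧ yv' = 1 then 0 else if k ≤ u' then 1 else if h ≤ u' then 2 else 3) * n + u')) := by
  obtain ⟨g1, g2⟩ := hP'
  subst g2
  split_ifs <;> omega

set_option maxHeartbeats 4000000 in
lemma tc2 (n k h a b s v u u' xv xs yv yv' : ℕ)
    (hn : n = 2*k) (hhk : h ≤ k) (ha : a < h) (hb : b < h)
    (hu : u < n) (hu' : u' < n)
    (hP : (u = a ∧ s = b) ∨ (u < a ∧ s = u + k) ∨ (a < u ∧ u < k ∧ s = u + k - 1) ∨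
          (k ≤ u ∧ u < k + b ∧ s = u - k) ∨ (k + b ≤ u ∧ u + 2 ≤ 2*k ∧ s = u + 1 - k) ∨
          (u = 2*k - 1 ∧ s = 2*k - 1))
    (hP' : (a < u' ∧ u' < k ∧ v = u' + k - 1))
    (hxs : u = a → xs = 1)
    (hyv' : u' = a → yv' = 1)
    (hun : u < h → v < h → xv = 1 → yv = 1 → u = a ∧ v = b) :
    ¬ ((if k ≤ u then v else if h ≤ u then (if k ≤ v then v - k else v + k)
         else (if v < h ∧ xv = 1 then 0 else if k ≤ v then 1 else if h ≤ v then 2 else 3) * n + v)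
       < (if k ≤ u then s else if h ≤ u then (if k ≤ s then s - k else s + k)
         else (if s < h ∧ xs = 1 then 0 else if k ≤ s then 1 else if h ≤ s then 2 else 3) * n + s)
      ∧ (if k ≤ v then u else if h ≤ v then (if k ≤ u then u - k else u + k)
         else (if u < h ∧ yv = 1 then 0 else if k ≤ u then 1 else if h ≤ u then 2 else 3) * n + u)
       < (if k ≤ v then u' else if h ≤ v then (if k ≤ u' then u' - k else u' + k)
         else (if u' < h ∧ yv' = 1 then 0 else if k ≤ u' then 1 else if h ≤ u' then 2 else 3) * n + u')) := by
  obtain ⟨g1, g1', g2⟩ := hP'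
  subst g2
  split_ifs <;> omega

set_option maxHeartbeats 4000000 in
lemma tc3 (n k h a b s v u u' xv xs yv yv' : ℕ)
    (hn : n = 2*k) (hhk : h ≤ k) (ha : a < h) (hb : b < h)
    (hu : u < n) (hu' : u' < n)
    (hP : (u = a ∧ s = b) ∨ (u < a ∧ s = u + k) ∨ (a < u ∧ u < k ∧ s = u + k - 1) ∨
          (k ≤ u ∧ u < k + b ∧ s = u - k) ∨ (k + b ≤ u ∧ u + 2 ≤ 2*k ∧ s = u + 1 - k) ∨
          (u = 2*k - 1 ∧ s = 2*k - 1))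
    (hP' : (k ≤ u' ∧ u' < k + b ∧ v = u' - k))
    (hxs : u = a → xs = 1)
    (hyv' : u' = a → yv' = 1)
    (hun : u < h → v < h → xv = 1 → yv = 1 → u = a ∧ v = b) :
    ¬ ((if k ≤ u then v else if h ≤ u then (if k ≤ v then v - k else v + k)
         else (if v < h ∧ xv = 1 then 0 else if k ≤ v then 1 else if h ≤ v then 2 else 3) * n + v)
       < (if k ≤ u then s else if h ≤ u then (if k ≤ s then s - k else s + k)
         else (if s < h ∧ xs = 1 then 0 else if k ≤ s then 1 else if h ≤ s then 2 else 3) * n + s)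
      ∧ (if k ≤ v then u else if h ≤ v then (if k ≤ u then u - k else u + k)
         else (if u < h ∧ yv = 1 then 0 else if k ≤ u then 1 else if h ≤ u then 2 else 3) * n + u)
       < (if k ≤ v then u' else if h ≤ v then (if k ≤ u' then u' - k else u' + k)
         else (if u' < h ∧ yv' = 1 then 0 else if k ≤ u' then 1 else if h ≤ u' then 2 else 3) * n + u')) := by
  obtain ⟨g1, g1', g2⟩ := hP'
  subst g2
  split_ifs <;> omega

set_option maxHeartbeats 4000000 in
lemma tc4 (n k h a b s v u u' xv xs yv yv' : ℕ)
    (hn : n = 2*k) (hhk : h ≤ k) (ha : a < h) (hb : b < h)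
    (hu : u < n) (hu' : u' < n)
    (hP : (u = a ∧ s = b) ∨ (u < a ∧ s = u + k) ∨ (a < u ∧ u < k ∧ s = u + k - 1) ∨
          (k ≤ u ∧ u < k + b ∧ s = u - k) ∨ (k + b ≤ u ∧ u + 2 ≤ 2*k ∧ s = u + 1 - k) ∨
          (u = 2*k - 1 ∧ s = 2*k - 1))
    (hP' : (k + b ≤ u' ∧ u' + 2 ≤ 2*k ∧ v = u' + 1 - k))
    (hxs : u = a → xs = 1)
    (hyv' : u' = a → yv' = 1)
    (hun : u < h → v < h → xv = 1 → yv = 1 → u = a ∧ v = b) :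
    ¬ ((if k ≤ u then v else if h ≤ u then (if k ≤ v then v - k else v + k)
         else (if v < h ∧ xv = 1 then 0 else if k ≤ v then 1 else if h ≤ v then 2 else 3) * n + v)
       < (if k ≤ u then s else if h ≤ u then (if k ≤ s then s - k else s + k)
         else (if s < h ∧ xs = 1 then 0 else if k ≤ s then 1 else if h ≤ s then 2 else 3) * n + s)
      ∧ (if k ≤ v then u else if h ≤ v then (if k ≤ u then u - k else u + k)
         else (if u < h ∧ yv = 1 then 0 else if k ≤ u then 1 else if h ≤ u then 2 else 3) * n + u)
       < (if k ≤ v then u' else if h ≤ v then (if k ≤ u' then u' - k else u' + k)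
         else (if u' < h ∧ yv' = 1 then 0 else if k ≤ u' then 1 else if h ≤ u' then 2 else 3) * n + u')) := by
  obtain ⟨g1, g1', g2⟩ := hP'
  subst g2
  split_ifs <;> omega

set_option maxHeartbeats 4000000 in
lemma tc5 (n k h a b s v u u' xv xs yv yv' : ℕ)
    (hn : n = 2*k) (hhk : h ≤ k) (ha : a < h) (hb : b < h)
    (hu : u < n) (hu' : u' < n)
    (hP : (u = a ∧ s = b) ∨ (u < a ∧ s = u + k) ∨ (a < u ∧ u < k ∧ s = u + k - 1) ∨
          (k ≤ u ∧ u < k + b ∧ s = u - k) ∨ (k + b ≤ u ∧ u + 2 ≤ 2*k ∧ s = u + 1 - k) ∨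
          (u = 2*k - 1 ∧ s = 2*k - 1))
    (hP' : (u' = 2*k - 1 ∧ v = 2*k - 1))
    (hxs : u = a → xs = 1)
    (hyv' : u' = a → yv' = 1)
    (hun : u < h → v < h → xv = 1 → yv = 1 → u = a ∧ v = b) :
    ¬ ((if k ≤ u then v else if h ≤ u then (if k ≤ v then v - k else v + k)
         else (if v < h ∧ xv = 1 then 0 else if k ≤ v then 1 else if h ≤ v then 2 else 3) * n + v)
       < (if k ≤ u then s else if h ≤ u then (if k ≤ s then s - k else s + k)
         else (if s < h ∧ xs = 1 then 0 else if k ≤ s then 1 else if h ≤ s then 2 else 3) * n + s)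
      ∧ (if k ≤ v then u else if h ≤ v then (if k ≤ u then u - k else u + k)
         else (if u < h ∧ yv = 1 then 0 else if k ≤ u then 1 else if h ≤ u then 2 else 3) * n + u)
       < (if k ≤ v then u' else if h ≤ v then (if k ≤ u' then u' - k else u' + k)
         else (if u' < h ∧ yv' = 1 then 0 else if k ≤ u' then 1 else if h ≤ u' then 2 else 3) * n + u')) := by
  obtain ⟨g1, g2⟩ := hP'
  subst g2
  split_ifs <;> omega

lemma tier_core (n k h a b s v u u' xv xs yv yv' : ℕ)
    (hn : n = 2*k) (hhk : h ≤ k) (ha : a < h) (hb : b < h)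
    (hu : u < n) (hu' : u' < n)
    (hP : (u = a ∧ s = b) ∨ (u < a ∧ s = u + k) ∨ (a < u ∧ u < k ∧ s = u + k - 1) ∨
          (k ≤ u ∧ u < k + b ∧ s = u - k) ∨ (k + b ≤ u ∧ u + 2 ≤ 2*k ∧ s = u + 1 - k) ∨
          (u = 2*k - 1 ∧ s = 2*k - 1))
    (hP' : (u' = a ∧ v = b) ∨ (u' < a ∧ v = u' + k) ∨ (a < u' ∧ u' < k ∧ v = u' + k - 1) ∨
          (k ≤ u' ∧ u' < k + b ∧ v = u' - k) ∨ (k + b ≤ u' ∧ u' + 2 ≤ 2*k ∧ v = u' + 1 - k) ∨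
          (u' = 2*k - 1 ∧ v = 2*k - 1))
    (hxs : u = a → xs = 1)
    (hyv' : u' = a → yv' = 1)
    (hun : u < h → v < h → xv = 1 → yv = 1 → u = a ∧ v = b) :
    ¬ ((if k ≤ u then v else if h ≤ u then (if k ≤ v then v - k else v + k)
         else (if v < h ∧ xv = 1 then 0 else if k ≤ v then 1 else if h ≤ v then 2 else 3) * n + v)
       < (if k ≤ u then s else if h ≤ u then (if k ≤ s then s - k else s + k)
         else (if s < h ∧ xs = 1 then 0 else if k ≤ s then 1 else if h ≤ s then 2 else 3) * n + s)
      ∧ (if k ≤ v then u else if h ≤ v then (if k ≤ u then u - k else u + k)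
         else (if u < h ∧ yv = 1 then 0 else if k ≤ u then 1 else if h ≤ u then 2 else 3) * n + u)
       < (if k ≤ v then u' else if h ≤ v then (if k ≤ u' then u' - k else u' + k)
         else (if u' < h ∧ yv' = 1 then 0 else if k ≤ u' then 1 else if h ≤ u' then 2 else 3) * n + u')) := by
  rcases hP' with h'|h'|h'|h'|h'|h'
  · exact tc0 n k h a b s v u u' xv xs yv yv' hn hhk ha hb hu hu' hP h' hxs hyv' hun
  · exact tc1 n k h a b s v u u' xv xs yv yv' hn hhk ha hb hu hu' hP h' hxs hyv' hun
  · exact tc2 n k h a b s v u u' xv xs yv yv' hn hhk ha hb hu hu' hP h' hxs hyv' hun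
  · exact tc3 n k h a b s v u u' xv xs yv yv' hn hhk ha hb hu hu' hP h' hxs hyv' hun
  · exact tc4 n k h a b s v u u' xv xs yv yv' hn hhk ha hb hu hu' hP h' hxs hyv' hun
  · exact tc5 n k h a b s v u u' xv xs yv yv' hn hhk ha hb hu hu' hP h' hxs hyv' hun

lemma muZero_noblock (n k h a b : ℕ) (x y : ℕ → ℕ → Bool)
    (hn : n = 2 * k) (hhk : h ≤ k) (ha : a < h) (hb : b < h)
    (hx : x a b = true) (hy : y a b = true)
    (huniq : ∀ i j : ℕ, i < h → j < h → x i j = true → y i j = true → i = a ∧ j = b)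
    (u u' : ℕ) (hu : u < n) (hu' : u' < n) :
    ¬ (tierWRank n k h x u (muZeroVal k a b u') < tierWRank n k h x u (muZeroVal k a b u) ∧
       tierMRank n k h y (muZeroVal k a b u') u < tierMRank n k h y (muZeroVal k a b u') u') := by
  have hak : a < k := by omega
  have hbk : b < k := by omega
  set s := muZeroVal k a b u with hs
  set v := muZeroVal k a b u' with hv
  have hPu := muZeroVal_region k a b u hak hbk (by omega)
  have hPu' := muZeroVal_region k a b u' hak hbk (by omega)
  rw [← hs] at hPu; rw [← hv] at hPu'
  set xv : ℕ := if x u v = true then 1 else 0 with hxv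
  set xs : ℕ := if x u s = true then 1 else 0 with hxs
  set yv : ℕ := if y u v = true then 1 else 0 with hyv
  set yv' : ℕ := if y u' v = true then 1 else 0 with hyv'
  have e1 : (v < h ∧ x u v = true) ↔ (v < h ∧ xv = 1) := by
    by_cases hc : x u v = true <;> simp [hxv, hc]
  have e2 : (s < h ∧ x u s = true) ↔ (s < h ∧ xs = 1) := by
    by_cases hc : x u s = true <;> simp [hxs, hc]
  have e3 : (u < h ∧ y u v = true) ↔ (u < h ∧ yv = 1) := by
    by_cases hc : y u v = true <;> simp [hyv, hc]
  have e4 : (u' < h ∧ y u' v = true) ↔ (u' < h ∧ yv' = 1) := by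
    by_cases hc : y u' v = true <;> simp [hyv', hc]
  have goal := tier_core n k h a b s v u u' xv xs yv yv' hn hhk ha hb hu hu' hPu hPu'
    (by intro hua; subst hua
        have : s = b := by rw [hs]; unfold muZeroVal; rw [if_pos rfl]
        rw [hxs, this, if_pos hx])
    (by intro hua; subst hua
        have : v = b := by rw [hv]; unfold muZeroVal; rw [if_pos rfl]
        rw [hyv', this, if_pos hy])
    (by intro h1 h2 h3 h4
        have hxt : x u v = true := by
          by_cases hc : x u v = true
          · exact hc
          · rw [hxv, if_neg hc] at h3; omega
        have hyt : y u v = true := by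
          by_cases hc : y u v = true
          · exact hc
          · rw [hyv, if_neg hc] at h4; omega
        exact huniq u v h1 h2 hxt hyt)
  intro hcon
  apply goal
  constructor
  · have := hcon.1
    unfold tierWRank at this
    simpa [e1, e2] using this
  · have := hcon.2
    unfold tierMRank at this
    simpa [e3, e4] using this


set_option maxHeartbeats 1600000 in
lemma unique_nat (n k h a b : ℕ) (x y : ℕ → ℕ → Bool) (f g : ℕ → ℕ)
    (hn : n = 2 * k) (hhk : h ≤ k) (ha : a < h) (hb : b < h)
    (hx : x a b = true) (hy : y a b = true)
    (huniq : ∀ i j : ℕ, i < h → j < h → x i j = true → y i j = true → i = a ∧ j = b)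
    (hflt : ∀ u, u < n → f u < n)
    (hgf : ∀ u, u < n → g (f u) = u)
    (hglt : ∀ v, v < n → g v < n)
    (hfg : ∀ v, v < n → f (g v) = v)
    (NB : ∀ u u', u < n → u' < n →
      ¬ (tierWRank n k h x u (f u') < tierWRank n k h x u (f u) ∧
         tierMRank n k h y (f u') u < tierMRank n k h y (f u') u')) :
    ∀ u, u < n → f u = muZeroVal k a b u := by
  have hak : a < k := by omega
  have hbk : b < k := by omega
  have hk1 : 1 ≤ k := by omega
  have inj : ∀ u u', u < n → u' < n → f u = f u' → u = u' := by
    intro u u' hu hu' he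
    have h1 := hgf u hu
    have h2 := hgf u' hu'
    rw [he] at h1
    omega
  -- U1 : a top-top pair exists
  have U1 : ∃ u, u < k ∧ f u < k := by
    by_contra hc
    push_neg at hc
    have hbn : b < n := by omega
    have hfi' : f (g b) = b := hfg b hbn
    have hi'n : g b < n := hglt b hbn
    have hi'k : k ≤ g b := by
      by_contra hlt
      push_neg at hlt
      have := hc (g b) hlt
      omega
    apply NB a (g b) (by omega) hi'n
    constructor
    · rw [hfi', wR_high_hit hhk ha hb hx, wR_high_low hhk ha (hc a (by omega))]
      omega
    · rw [hfi', mR_high_hit hhk hb ha hy, mR_high_low hhk hb hi'k]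
      omega
  -- U2 : a low-low pair exists
  have U2 : ∃ u, k ≤ u ∧ u < n ∧ k ≤ f u := by
    by_contra hc
    push_neg at hc
    obtain ⟨u₀, hu₀, hv₀⟩ := U1
    have hmaps : ∀ u ∈ insert u₀ (Finset.Ico k n), f u ∈ Finset.range k := by
      intro u hu
      rcases Finset.mem_insert.mp hu with rfl | hmem
      · exact Finset.mem_range.mpr hv₀
      · have hm := Finset.mem_Ico.mp hmem
        exact Finset.mem_range.mpr (hc u hm.1 hm.2)
    have hinj : Set.InjOn f ((insert u₀ (Finset.Ico k n) : Finset ℕ) : Set ℕ) := by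
      intro p hp q hq he
      simp only [Finset.coe_insert, Set.mem_insert_iff, Finset.mem_coe, Finset.mem_Ico] at hp hq
      have hpn : p < n := by rcases hp with rfl | hp <;> omega
      have hqn : q < n := by rcases hq with rfl | hq <;> omega
      exact inj p q hpn hqn he
    have hcard := Finset.card_le_card_of_injOn f hmaps hinj
    rw [Finset.card_insert_of_notMem (by simp only [Finset.mem_Ico]; omega),
      Nat.card_Ico, Finset.card_range] at hcard
    omega
  -- U3 : every top-top pair is (a, b)
  have U3 : ∀ u, u < k → f u < k → u = a ∧ f u = b := by
    intro u hu hv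
    obtain ⟨u1, hu1k, hu1n, hv1⟩ := U2
    have hv1n : f u1 < n := hflt u1 hu1n
    have hun : u < n := by omega
    have hs1 : u < h ∧ f u < h ∧ x u (f u) = true := by
      by_contra hcon
      apply NB u u1 hun hu1n
      refine ⟨?_, ?_⟩
      · by_cases huh : u < h
        · have hw1 : tierWRank n k h x u (f u1) = n + f u1 := wR_high_low hhk huh hv1
          by_cases hfh : f u < h
          · have hxf : x u (f u) = false := by
              cases hcx : x u (f u)
              · rfl
              · exact absurd ⟨huh, hfh, hcx⟩ hcon
            rw [hw1, wR_high_miss hhk huh hfh hxf]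
            omega
          · rw [hw1, wR_high_mid hhk huh (by omega) hv]
            omega
        · rw [wR_mid_low (by omega) hu hv1, wR_mid_top (by omega) hu hv]
          omega
      · rw [mR_low hv1, mR_low hv1]
        omega
    obtain ⟨huh, hfh, hxu⟩ := hs1
    have hyu : y u (f u) = true := by
      cases hcy : y u (f u)
      · exfalso
        apply NB u1 u hu1n hun
        refine ⟨?_, ?_⟩
        · rw [wR_low hu1k, wR_low hu1k]
          omega
        · rw [mR_high_low hhk hfh hu1k, mR_high_miss hhk hfh huh hcy]
          omega
      · rfl
    exact huniq u (f u) huh hfh hxu hyu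
  have U4 : f a = b := by
    obtain ⟨u, hu, hv⟩ := U1
    obtain ⟨h1, h2⟩ := U3 u hu hv
    rw [← h1]
    exact h2
  -- U5ii : the last woman's partner is a low man
  have U5ii : k ≤ f (n - 1) := by
    by_contra hcl
    push_neg at hcl
    obtain ⟨u1, hu1k, hu1n, hv1⟩ := U2
    have hu1lt : u1 < n - 1 := by
      have : u1 ≠ n - 1 := by
        intro he
        rw [he] at hv1
        omega
      omega
    apply NB u1 (n - 1) hu1n (by omega)
    constructor
    · rw [wR_low hu1k, wR_low hu1k]
      omega
    · by_cases hfh2 : f (n - 1) < h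
      · rw [mR_high_low hhk hfh2 hu1k, mR_high_low hhk hfh2 (by omega)]
        omega
      · rw [mR_mid_low (by omega) hcl hu1k, mR_mid_low (by omega) hcl (by omega)]
        omega
  -- U5iii : the last man's partner is a low woman
  have U5iii : k ≤ g (n - 1) := by
    by_contra hcl
    push_neg at hcl
    have hi2n : g (n - 1) < n := hglt _ (by omega)
    have hfi2 : f (g (n - 1)) = n - 1 := hfg _ (by omega)
    obtain ⟨u1, hu1k, hu1n, hv1⟩ := U2
    have hv1lt : f u1 < n - 1 := by
      have h1 : f u1 ≠ n - 1 := by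
        intro he
        have := inj u1 (g (n - 1)) hu1n hi2n (by rw [he, hfi2])
        omega
      have := hflt u1 hu1n
      omega
    apply NB (g (n - 1)) u1 hi2n hu1n
    constructor
    · by_cases hih : g (n - 1) < h
      · rw [hfi2, wR_high_low hhk hih hv1, wR_high_low hhk hih (by omega)]
        omega
      · rw [hfi2, wR_mid_low (by omega) hcl hv1, wR_mid_low (by omega) hcl (by omega)]
        omega
    · rw [mR_low hv1, mR_low hv1]
      omega
  -- U5 : last woman marries last man
  have U5 : f (n - 1) = n - 1 := by
    by_contra hne
    have hfi2 : f (g (n - 1)) = n - 1 := hfg _ (by omega)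
    have hi2n : g (n - 1) < n := hglt _ (by omega)
    have hi2lt : g (n - 1) < n - 1 := by
      have h1 : g (n - 1) ≠ n - 1 := by
        intro he
        rw [he] at hfi2
        exact hne hfi2
      omega
    have hf1 : f (n - 1) < n - 1 := by
      have := hflt (n - 1) (by omega)
      omega
    apply NB (g (n - 1)) (n - 1) hi2n (by omega)
    constructor
    · rw [hfi2, wR_low U5iii, wR_low U5iii]
      omega
    · rw [mR_low U5ii, mR_low U5ii]
      omega
  -- the counting argument : all other low women marry top men
  have hcount : ∀ u, k ≤ u → u < n - 1 → f u < k := by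
    have hA : Finset.filter (fun u => f u < k) (Finset.range k) = {a} := by
      ext u
      simp only [Finset.mem_filter, Finset.mem_range, Finset.mem_singleton]
      constructor
      · rintro ⟨h1, h2⟩
        exact (U3 u h1 h2).1
      · rintro rfl
        refine ⟨hak, by rw [U4]; omega⟩
    have hS : (Finset.filter (fun u => f u < k) (Finset.range n)).card = k := by
      have hbj : (Finset.filter (fun u => f u < k) (Finset.range n)).card =
          (Finset.range k).card := by
        apply Finset.card_bij (fun u _ => f u)
        · intro u hu
          simp only [Finset.mem_filter, Finset.mem_range] at hu
          simp only [Finset.mem_range]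
          exact hu.2
        · intro p hp q hq he
          simp only [Finset.mem_filter, Finset.mem_range] at hp hq
          exact inj p q hp.1 hq.1 he
        · intro v hv
          simp only [Finset.mem_range] at hv
          have hvn : v < n := by omega
          refine ⟨g v, ?_, hfg v hvn⟩
          simp only [Finset.mem_filter, Finset.mem_range]
          exact ⟨hglt v hvn, by rw [hfg v hvn]; exact hv⟩
      rw [Finset.card_range] at hbj
      exact hbj
    have hdis : Disjoint (Finset.range k) (Finset.Ico k n) := by
      simp only [Finset.disjoint_left, Finset.mem_range, Finset.mem_Ico]
      intro u hu
      omega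
    have hsplit : Finset.range n = Finset.range k ∪ Finset.Ico k n := by
      ext u
      simp only [Finset.mem_range, Finset.mem_union, Finset.mem_Ico]
      omega
    have hCcard : (Finset.filter (fun u => f u < k) (Finset.Ico k n)).card = k - 1 := by
      rw [hsplit, Finset.filter_union,
        Finset.card_union_of_disjoint (Finset.disjoint_filter_filter hdis), hA] at hS
      simp only [Finset.card_singleton] at hS
      omega
    have hD : (Finset.filter (fun u => k ≤ f u) (Finset.Ico k n)).card = 1 := by
      have hun : Finset.filter (fun u => f u < k) (Finset.Ico k n) ∪
          Finset.filter (fun u => k ≤ f u) (Finset.Ico k n) = Finset.Ico k n := by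
        ext u
        simp only [Finset.mem_union, Finset.mem_filter, Finset.mem_Ico]
        omega
      have hdis2 : Disjoint (Finset.filter (fun u => f u < k) (Finset.Ico k n))
          (Finset.filter (fun u => k ≤ f u) (Finset.Ico k n)) := by
        simp only [Finset.disjoint_left, Finset.mem_filter, Finset.mem_Ico]
        intro u hu
        omega
      have hcu := Finset.card_union_of_disjoint hdis2
      rw [hun, Nat.card_Ico] at hcu
      omega
    intro u hku hun1
    by_contra hge
    push_neg at hge
    have hu_mem : u ∈ Finset.filter (fun u => k ≤ f u) (Finset.Ico k n) := by
      simp only [Finset.mem_filter, Finset.mem_Ico]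
      omega
    have hl_mem : (n - 1) ∈ Finset.filter (fun u => k ≤ f u) (Finset.Ico k n) := by
      simp only [Finset.mem_filter, Finset.mem_Ico]
      exact ⟨by omega, U5ii⟩
    have := Finset.one_lt_card.mpr ⟨u, hu_mem, n - 1, hl_mem, by omega⟩
    omega
  -- U6 : the top women
  have U6 : ∀ u, u < k → u ≠ a → f u = (if u < a then u + k else u + k - 1) := by
    intro u
    induction u using Nat.strong_induction_on with
    | _ u IH =>
    intro hu hua
    set E := (if u < a then u + k else u + k - 1) with hEdef
    have hE : (u < a ∧ E = u + k) ∨ (a < u ∧ E = u + k - 1) := by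
      rw [hEdef]
      split_ifs <;> omega
    have hfu_low : k ≤ f u := by
      by_contra hc
      push_neg at hc
      exact hua (U3 u hu hc).1
    have hfu_ne : f u ≠ n - 1 := by
      intro hcon
      have := inj u (n - 1) (by omega) (by omega) (by rw [hcon, U5])
      omega
    have hfun : f u < n := hflt u (by omega)
    have hlb : E ≤ f u := by
      by_contra hc
      push_neg at hc
      by_cases hcase : f u - k < a
      · have hfw := IH (f u - k) (by omega) (by omega) (by omega)
        have heq : f (f u - k) = f u := by
          rw [hfw, if_pos hcase]
          omega
        have := inj (f u - k) u (by omega) (by omega) heq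
        omega
      · have hfw := IH (f u - k + 1) (by omega) (by omega) (by omega)
        have heq : f (f u - k + 1) = f u := by
          rw [hfw, if_neg (by omega)]
          omega
        have := inj (f u - k + 1) u (by omega) (by omega) heq
        omega
    have hub : f u ≤ E := by
      by_contra hc
      push_neg at hc
      have hEn : E < n - 1 := by omega
      have hEk : k ≤ E := by omega
      have hfu' : f (g E) = E := hfg E (by omega)
      have hu'n : g E < n := hglt E (by omega)
      have hu'k : g E < k := by
        by_contra hc2
        push_neg at hc2
        by_cases hc3 : g E < n - 1
        · have := hcount (g E) hc2 hc3
          omega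
        · have hgeq : g E = n - 1 := by omega
          rw [hgeq, U5] at hfu'
          omega
      have hu'a : g E ≠ a := by
        intro he
        rw [he, U4] at hfu'
        omega
      have hu'gt : u < g E := by
        by_cases hlt : g E < u
        · have h4 := IH (g E) hlt hu'k hu'a
          have h5 : (g E < a ∧ f (g E) = g E + k) ∨ (a < g E ∧ f (g E) = g E + k - 1) := by
            rw [h4]
            split_ifs <;> omega
          omega
        · have : g E ≠ u := by
            intro he
            rw [he] at hfu'
            omega
          omega
      apply NB u (g E) (by omega) hu'n
      constructor
      · by_cases huh : u < h
        · rw [hfu', wR_high_low hhk huh hEk, wR_high_low hhk huh hfu_low]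
          omega
        · rw [hfu', wR_mid_low (by omega) hu hEk, wR_mid_low (by omega) hu hfu_low]
          omega
      · rw [hfu', mR_low hEk, mR_low hEk]
        omega
    omega
  -- U7 : the low women below the last
  have U7 : ∀ u, k ≤ u → u < n - 1 → f u = (if u < k + b then u - k else u + 1 - k) := by
    intro u
    induction u using Nat.strong_induction_on with
    | _ u IH =>
    intro hku hun
    set E := (if u < k + b then u - k else u + 1 - k) with hEdef
    have hE : (u < k + b ∧ E = u - k) ∨ (k + b ≤ u ∧ E = u + 1 - k) := by
      rw [hEdef]
      split_ifs <;> omega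
    have hfu_top : f u < k := hcount u hku hun
    have hfu_ne : f u ≠ b := by
      intro he
      have := inj u a (by omega) (by omega) (by rw [he, U4])
      omega
    have hlb : E ≤ f u := by
      by_contra hc
      push_neg at hc
      by_cases hcase : f u < b
      · have hfw := IH (f u + k) (by omega) (by omega) (by omega)
        have heq : f (f u + k) = f u := by
          rw [hfw, if_pos (by omega)]
          omega
        have := inj (f u + k) u (by omega) (by omega) heq
        omega
      · have hfw := IH (f u + k - 1) (by omega) (by omega) (by omega)
        have heq : f (f u + k - 1) = f u := by
          rw [hfw, if_neg (by omega)]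
          omega
        have := inj (f u + k - 1) u (by omega) (by omega) heq
        omega
    have hub : f u ≤ E := by
      by_contra hc
      push_neg at hc
      have hEb : E ≠ b := by omega
      have hEk : E < k := by omega
      have hfu' : f (g E) = E := hfg E (by omega)
      have hu'n : g E < n := hglt E (by omega)
      have hu'low : k ≤ g E := by
        by_contra hc2
        push_neg at hc2
        have h6 := U3 (g E) hc2 (by omega)
        rw [hfu'] at h6
        omega
      have hu'ne : g E < n - 1 := by
        by_contra hc2
        push_neg at hc2
        have hgeq : g E = n - 1 := by omega
        rw [hgeq, U5] at hfu'
        omega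
      have hu'gt : u < g E := by
        by_cases hlt : g E < u
        · have h4 := IH (g E) hlt hu'low hu'ne
          have h5 : (g E < k + b ∧ f (g E) = g E - k) ∨
              (k + b ≤ g E ∧ f (g E) = g E + 1 - k) := by
            rw [h4]
            split_ifs <;> omega
          omega
        · have : g E ≠ u := by
            intro he
            rw [he] at hfu'
            omega
          omega
      apply NB u (g E) (by omega) hu'n
      constructor
      · rw [hfu', wR_low hku, wR_low hku]
        omega
      · rw [hfu']
        by_cases hEh : E < h
        · rw [mR_high_low hhk hEh hku, mR_high_low hhk hEh hu'low]
          omega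
        · rw [mR_mid_low (by omega) hEk hku, mR_mid_low (by omega) hEk hu'low]
          omega
    omega
  -- final assembly
  intro u hun
  by_cases h1 : u = a
  · subst h1
    rw [U4]
    unfold muZeroVal
    rw [if_pos rfl]
  · by_cases h2 : u < k
    · have h3 := U6 u h2 h1
      have h5 : (u < a ∧ f u = u + k) ∨ (a < u ∧ f u = u + k - 1) := by
        rw [h3]
        split_ifs <;> omega
      unfold muZeroVal
      split_ifs <;> omega
    · by_cases h3 : u < n - 1
      · have h4 := U7 u (by omega) h3
        have h5 : (u < k + b ∧ f u = u - k) ∨ (k + b ≤ u ∧ f u = u + 1 - k) := by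
          rw [h4]
          split_ifs <;> omega
        unfold muZeroVal
        split_ifs <;> omega
      · have hu' : u = n - 1 := by omega
        rw [hu', U5]
        unfold muZeroVal
        split_ifs <;> omega

lemma muZero_val (n k a b : ℕ) (hn : n = 2 * k) (hak : a < k) (hbk : b < k) (i : Fin n) :
    (muZero n k a b i).val = muZeroVal k a b i.val := by
  have hlt : muZeroVal k a b i.val < n := by
    have h1 := muZeroVal_lt k a b i.val hak hbk (by have := i.isLt; omega)
    omega
  simp only [muZero]
  exact Nat.mod_eq_of_lt hlt

/-- In the three-tier construction with a uniquely-intersecting instance (exactly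
one pair of high indices `(a, b)` — `(α, β)` in the 1-indexed notation of the
paper — has `x^a_b = y^a_b = 1`), the marriage `μ₀` is the unique stable marriage.
Here `n = 2 * k`, `0 < δ ≤ 1`, and `h = δn/2` (so `h ≤ k`). -/
theorem tier_unique_intersection_unique_stable (n k h a b : ℕ) (δ : ℝ)
    (x y : ℕ → ℕ → Bool)
    (hn : n = 2 * k) (hδ0 : 0 < δ) (hδ1 : δ ≤ 1)
    (hh : (h : ℝ) = δ * n / 2) (hhk : h ≤ k)
    (ha : a < h) (hb : b < h)
    (hxy : x a b = true ∧ y a b = true)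
    (huniq : ∀ i j : ℕ, i < h → j < h → x i j = true → y i j = true → i = a ∧ j = b) :
    StableFull n (tierWRank n k h x) (tierMRank n k h y) (muZero n k a b) ∧
      ∀ μ : Fin n → Fin n,
        StableFull n (tierWRank n k h x) (tierMRank n k h y) μ → μ = muZero n k a b := by
  have hak : a < k := by omega
  have hbk : b < k := by omega
  constructor
  · constructor
    · -- bijectivity
      have hinj : Function.Injective (muZero n k a b) := by
        intro p q he
        have h1 := muZero_val n k a b hn hak hbk p
        have h2 := muZero_val n k a b hn hak hbk q
        have h3 : muZeroVal k a b p.val = muZeroVal k a b q.val := by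
          rw [← h1, ← h2, he]
        apply Fin.ext
        have h4 := muZeroVal_inv k a b p.val hak hbk (by have := p.isLt; omega)
        have h5 := muZeroVal_inv k a b q.val hak hbk (by have := q.isLt; omega)
        rw [h3] at h4
        omega
      exact Finite.injective_iff_bijective.mp hinj
    · intro i i'
      rw [muZero_val n k a b hn hak hbk i, muZero_val n k a b hn hak hbk i']
      exact muZero_noblock n k h a b x y hn hhk ha hb hxy.1 hxy.2 huniq
        i.val i'.val i.isLt i'.isLt
  · rintro μ ⟨hbij, hnb⟩
    have eqv := Equiv.ofBijective μ hbij
    set f : ℕ → ℕ := fun u => if hu : u < n then (μ ⟨u, hu⟩).val else 0 with hfdef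
    set g : ℕ → ℕ := fun v => if hv : v < n then ((Equiv.ofBijective μ hbij).symm ⟨v, hv⟩).val else 0
      with hgdef
    have hfval : ∀ (i : Fin n), f i.val = (μ i).val := by
      intro i
      rw [hfdef]
      simp only
      rw [dif_pos i.isLt]
    have hflt : ∀ u, u < n → f u < n := by
      intro u hu
      rw [hfdef]
      simp only
      rw [dif_pos hu]
      exact (μ ⟨u, hu⟩).isLt
    have hglt : ∀ v, v < n → g v < n := by
      intro v hv
      rw [hgdef]
      simp only
      rw [dif_pos hv]
      exact ((Equiv.ofBijective μ hbij).symm ⟨v, hv⟩).isLt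
    have hgf : ∀ u, u < n → g (f u) = u := by
      intro u hu
      rw [hfdef]
      simp only
      rw [dif_pos hu, hgdef]
      simp only
      rw [dif_pos (μ ⟨u, hu⟩).isLt]
      have h1 : (⟨(μ ⟨u, hu⟩).val, (μ ⟨u, hu⟩).isLt⟩ : Fin n) = μ ⟨u, hu⟩ := rfl
      rw [h1]
      have h2 : μ ⟨u, hu⟩ = (Equiv.ofBijective μ hbij) ⟨u, hu⟩ := rfl
      rw [h2, Equiv.symm_apply_apply]
    have hfg : ∀ v, v < n → f (g v) = v := by
      intro v hv
      rw [hgdef]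
      simp only
      rw [dif_pos hv, hfdef]
      simp only
      rw [dif_pos ((Equiv.ofBijective μ hbij).symm ⟨v, hv⟩).isLt]
      have h1 : (⟨((Equiv.ofBijective μ hbij).symm ⟨v, hv⟩).val,
          ((Equiv.ofBijective μ hbij).symm ⟨v, hv⟩).isLt⟩ : Fin n) =
          (Equiv.ofBijective μ hbij).symm ⟨v, hv⟩ := rfl
      rw [h1]
      have h2 : μ ((Equiv.ofBijective μ hbij).symm ⟨v, hv⟩) =
          (Equiv.ofBijective μ hbij) ((Equiv.ofBijective μ hbij).symm ⟨v, hv⟩) := rfl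
      rw [h2, Equiv.apply_symm_apply]
    have NB : ∀ u u', u < n → u' < n →
        ¬ (tierWRank n k h x u (f u') < tierWRank n k h x u (f u) ∧
           tierMRank n k h y (f u') u < tierMRank n k h y (f u') u') := by
      intro u u' hu hu' hcon
      apply hnb ⟨u, hu⟩ ⟨u', hu'⟩
      rw [← hfval ⟨u, hu⟩, ← hfval ⟨u', hu'⟩]
      exact hcon
    have huval := unique_nat n k h a b x y f g hn hhk ha hb hxy.1 hxy.2 huniq
      hflt hgf hglt hfg NB
    funext i
    apply Fin.ext
    rw [muZero_val n k a b hn hak hbk i, ← hfval i]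
    exact huval i.val i.isLt
end

section
/- Let n ∈ ℕ and let W = {w_1, …, w_n}, M = {m_1, …, m_n}, W' = {w'_1, …, w'_n}, M' = {m'_1, …, m'_n} be pairwise disjoint sets. Given a profile P_W of partial preference lists for W over M and a profile P_M for M over W, define full preference lists on W ∪ W' over M ∪ M' as follows: the list of w_i is her list in P_W (in the same order), followed by m'_i, followed by all remaining men sorted by index; the list of w'_i is m_i followed by all remaining men sorted by index; and symmetrically for the men (the list of m_j is his list in P_M, then w'_j, then all remaining women; the list of m'_j is w_j, then all remaining women). Then for every marriage μ between W and M, the following are equivalent: (i) μ is stable with respect to P_W and P_M; (ii) μ is a submarriage of some perfect marriage between W ∪ W' and M ∪ M' that is stable with respect to the constructed full preference lists. -/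
/-- `listPref l a b`: in the (possibly partial) preference list `l`
(most-preferred first), `a` is preferred over `b`: `a` is on the list, and
either `b` is not on the list or `a` precedes `b` on it. -/
def listPref {α : Type} [DecidableEq α] (l : List α) (a b : α) : Prop :=
  a ∈ l ∧ (b ∈ l → l.idxOf a < l.idxOf b)

/-- A marriage between (a subset of) the women `Fin nw` and (a subset of) the
men `Fin nm`: `μ i = some j` means woman `i` is married to man `j`, and
`μ i = none` means woman `i` is single; no two women share a husband. -/
def IsMarriage {nw nm : ℕ} (μ : Fin nw → Option (Fin nm)) : Prop :=
  ∀ i i' j, μ i = some j → μ i' = some j → i = i'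

/-- Stability of a marriage `μ` with respect to (possibly partial) preference
lists `wL` (women's lists of men) and `mL` (men's lists of women): every married
participant is married to someone on their own list, and there is no blocking
pair, i.e. no pair `(i, j)`, with `j` on `i`'s list and `i` on `j`'s list, such
that woman `i` is single or prefers `j` over her spouse, and man `j` is single
or prefers `i` over his spouse. -/
def StableL {nw nm : ℕ} (wL : Fin nw → List (Fin nm)) (mL : Fin nm → List (Fin nw))
    (μ : Fin nw → Option (Fin nm)) : Prop :=
  (∀ i j, μ i = some j → j ∈ wL i ∧ i ∈ mL j) ∧
  ¬∃ (i : Fin nw) (j : Fin nm),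
      j ∈ wL i ∧ i ∈ mL j ∧
      (∀ j', μ i = some j' → listPref (wL i) j j') ∧
      (∀ i', μ i' = some j → listPref (mL j) i i')

/-- Append to the list `l` all the remaining elements of `Fin N`, sorted by index. -/
def completeL {N : ℕ} (l : List (Fin N)) : List (Fin N) :=
  l ++ (List.finRange N).filter (fun a => !(l.contains a))

/-- Extension of a profile `L` of partial preference lists on `Fin n` to a profile
of full preference lists on `Fin (n + n)`.  On each side, participant `i < n` is
an original participant (`w_{i+1}` resp. `m_{j+1}`) and participant `n + i` is a
primed participant (`w'_{i+1}` resp. `m'_{j+1}`).  The full list of `w_i` is her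
original list (in the same order), then `m'_i`, then all remaining men sorted by
index; the full list of `w'_i` is `m_i` followed by all remaining men sorted by
index.  The men's lists are extended by the same construction. -/
def extL (n : ℕ) (L : Fin n → List (Fin n)) : Fin (n + n) → List (Fin (n + n)) :=
  fun i =>
    if h : i.val < n then
      completeL (((L ⟨i.val, h⟩).map (Fin.castAdd n)) ++ [Fin.natAdd n ⟨i.val, h⟩])
    else
      completeL [Fin.castAdd n ⟨i.val - n, by have := i.isLt; omega⟩]

/-!
The primed participants act as a buffer. `m'_i` comes right after `w_i`'s original list and
ranks her first, so in a stable extension `w_i` can only end up with `m'_i` when she is single,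
and she cannot be married to someone off her list, since she would block with `m'_i`; the same
holds for `m_j` and `w'_j`. Every original participant prefers everybody on the original list to
every primed participant, so blocking pairs of `μ` and of the extension among original
participants correspond. To extend a stable `μ`, what remains is to match the `w'_k` of the
married men `m_k` with the `m'_b` of the married women `w_b`; these rank each other by index, so
matching them in increasing order is stable.
-/

open Function List

section ListPref

variable {α : Type} [DecidableEq α] {l l₁ l₂ : List α} {a b : α}

theorem listPref_iff_idxOf_lt : listPref l a b ↔ l.idxOf a < l.idxOf b := by
  refine ⟨fun ⟨ha, hab⟩ => ?_,
    fun h => ⟨idxOf_lt_length_iff.1 (h.trans_le idxOf_le_length), fun _ => h⟩⟩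
  by_cases hb : b ∈ l
  · exact hab hb
  · rw [idxOf_eq_length hb]
    exact idxOf_lt_length_of_mem ha

theorem listPref_irrefl (l : List α) (a : α) : ¬ listPref l a a := by
  simp [listPref_iff_idxOf_lt]

theorem listPref_asymm (h : listPref l a b) : ¬ listPref l b a := by
  rw [listPref_iff_idxOf_lt] at *
  omega

theorem listPref_of_mem_of_notMem (ha : a ∈ l) (hb : b ∉ l) : listPref l a b :=
  ⟨ha, fun h => absurd h hb⟩

theorem listPref_append_iff_left (h : a ∈ l₁ ∨ b ∈ l₁) :
    listPref (l₁ ++ l₂) a b ↔ listPref l₁ a b := by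
  simp only [listPref_iff_idxOf_lt, idxOf_append]
  grind [idxOf_eq_length, idxOf_lt_length_iff]

theorem listPref_append_iff_right (ha : a ∉ l₁) (hb : b ∉ l₁) :
    listPref (l₁ ++ l₂) a b ↔ listPref l₂ a b := by
  simp only [listPref_iff_idxOf_lt, idxOf_append, if_neg ha, if_neg hb]
  omega

theorem listPref_map_iff {β : Type} [DecidableEq β] {f : α → β} (hf : Injective f) :
    listPref (l.map f) (f a) (f b) ↔ listPref l a b := by
  simp only [listPref_iff_idxOf_lt, idxOf, findIdx_map, Function.comp_def, hf.beq_eq]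

theorem listPref_iff_lt_of_sortedLT [Preorder α] (hl : l.SortedLT) (ha : a ∈ l) (hb : b ∈ l) :
    listPref l a b ↔ a < b := by
  rw [listPref_iff_idxOf_lt]
  conv_rhs =>
    rw [← idxOf_get (idxOf_lt_length_of_mem ha), ← idxOf_get (idxOf_lt_length_of_mem hb)]
  exact (hl.strictMono_get.lt_iff_lt (a := ⟨_, _⟩) (b := ⟨_, _⟩)).symm

end ListPref

section CompleteL

variable {N : ℕ} {l : List (Fin N)} {a b : Fin N}

theorem mem_completeL (l : List (Fin N)) (a : Fin N) : a ∈ completeL l := by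
  by_cases h : a ∈ l <;> simp [completeL, h]

theorem listPref_completeL_iff_of_mem (h : a ∈ l ∨ b ∈ l) :
    listPref (completeL l) a b ↔ listPref l a b :=
  listPref_append_iff_left h

theorem listPref_completeL_iff_lt (ha : a ∉ l) (hb : b ∉ l) :
    listPref (completeL l) a b ↔ a < b := by
  rw [completeL, listPref_append_iff_right ha hb]
  exact listPref_iff_lt_of_sortedLT ((sortedLT_finRange N).pairwise.filter _).sortedLT
    (by simpa using ha) (by simpa using hb)

end CompleteL

section ExtL

variable {n : ℕ} {L : Fin n → List (Fin n)} {p q q' k b b' : Fin n} {y : Fin (n + n)}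

theorem Fin.castAdd_ne_natAdd (i k : Fin n) : Fin.castAdd n i ≠ Fin.natAdd n k := by
  simp only [ne_eq, Fin.ext_iff, Fin.val_castAdd, Fin.val_natAdd]
  omega

theorem natAdd_notMem_map_castAdd (l : List (Fin n)) (k : Fin n) :
    Fin.natAdd n k ∉ l.map (Fin.castAdd n) := by
  simpa using fun i _ => Fin.castAdd_ne_natAdd i k

theorem castAdd_mem_map_castAdd_append_iff (l : List (Fin n)) (q p : Fin n) :
    Fin.castAdd n q ∈ l.map (Fin.castAdd n) ++ [Fin.natAdd n p] ↔ q ∈ l := by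
  simp only [mem_append, mem_singleton, Fin.castAdd_ne_natAdd, or_false,
    mem_map_of_injective (Fin.castAdd_injective n n)]

theorem extL_castAdd (L : Fin n → List (Fin n)) (p : Fin n) :
    extL n L (Fin.castAdd n p) =
      completeL ((L p).map (Fin.castAdd n) ++ [Fin.natAdd n p]) := by
  simp [extL]

theorem extL_natAdd (L : Fin n → List (Fin n)) (k : Fin n) :
    extL n L (Fin.natAdd n k) = completeL [Fin.castAdd n k] := by
  simp [extL]

theorem mem_extL (L : Fin n → List (Fin n)) (x a : Fin (n + n)) : a ∈ extL n L x := by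
  unfold extL
  split <;> exact mem_completeL _ _

theorem extL_castAdd_pref_castAdd_iff (hq' : q' ∈ L p) :
    listPref (extL n L (Fin.castAdd n p)) (Fin.castAdd n q) (Fin.castAdd n q') ↔
      listPref (L p) q q' := by
  have hmem : Fin.castAdd n q' ∈ (L p).map (Fin.castAdd n) := mem_map_of_mem hq'
  rw [extL_castAdd, listPref_completeL_iff_of_mem (Or.inr (mem_append_left _ hmem)),
    listPref_append_iff_left (Or.inr hmem), listPref_map_iff (Fin.castAdd_injective n n)]

theorem extL_castAdd_pref_natAdd (hq : q ∈ L p) (k : Fin n) :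
    listPref (extL n L (Fin.castAdd n p)) (Fin.castAdd n q) (Fin.natAdd n k) := by
  have hmem : Fin.castAdd n q ∈ (L p).map (Fin.castAdd n) := mem_map_of_mem hq
  rw [extL_castAdd, listPref_completeL_iff_of_mem (Or.inl (mem_append_left _ hmem)),
    listPref_append_iff_left (Or.inl hmem)]
  exact listPref_of_mem_of_notMem hmem (natAdd_notMem_map_castAdd _ k)

theorem extL_castAdd_pref_natAdd_self_iff :
    listPref (extL n L (Fin.castAdd n p)) (Fin.castAdd n q) (Fin.natAdd n p) ↔ q ∈ L p := by
  refine ⟨fun h => ?_, fun hq => extL_castAdd_pref_natAdd hq p⟩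
  rw [extL_castAdd, listPref_completeL_iff_of_mem (Or.inr (by simp))] at h
  exact (castAdd_mem_map_castAdd_append_iff _ q p).1 h.1

theorem not_extL_castAdd_pref_natAdd_natAdd_self (k : Fin n) :
    ¬ listPref (extL n L (Fin.castAdd n p)) (Fin.natAdd n k) (Fin.natAdd n p) := by
  rw [extL_castAdd, listPref_completeL_iff_of_mem (Or.inr (by simp)),
    listPref_append_iff_right (natAdd_notMem_map_castAdd _ k) (natAdd_notMem_map_castAdd _ p)]
  intro h
  rw [mem_singleton.1 h.1] at h
  exact listPref_irrefl _ _ h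

theorem extL_castAdd_pref_natAdd_self_castAdd (hq : q ∉ L p) :
    listPref (extL n L (Fin.castAdd n p)) (Fin.natAdd n p) (Fin.castAdd n q) := by
  rw [extL_castAdd, listPref_completeL_iff_of_mem (Or.inl (by simp))]
  exact listPref_of_mem_of_notMem (by simp) (by rwa [castAdd_mem_map_castAdd_append_iff])

theorem extL_natAdd_pref_castAdd_self {a : Fin (n + n)} (ha : a ≠ Fin.castAdd n k) :
    listPref (extL n L (Fin.natAdd n k)) (Fin.castAdd n k) a := by
  rw [extL_natAdd, listPref_completeL_iff_of_mem (Or.inl (mem_singleton_self _))]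
  exact listPref_of_mem_of_notMem (mem_singleton_self _) (by simpa using ha)

theorem not_extL_natAdd_pref_castAdd_self (a : Fin (n + n)) :
    ¬ listPref (extL n L (Fin.natAdd n k)) a (Fin.castAdd n k) := by
  by_cases ha : a = Fin.castAdd n k
  · exact ha ▸ listPref_irrefl _ _
  · exact listPref_asymm (extL_natAdd_pref_castAdd_self ha)

theorem extL_natAdd_pref_natAdd_iff :
    listPref (extL n L (Fin.natAdd n k)) (Fin.natAdd n b) (Fin.natAdd n b') ↔ b < b' := by
  rw [extL_natAdd, listPref_completeL_iff_lt (mt mem_singleton.1 (Fin.castAdd_ne_natAdd k b).symm)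
    (mt mem_singleton.1 (Fin.castAdd_ne_natAdd k b').symm), Fin.natAdd_lt_natAdd_iff]

/-- `R q` says that `q` is the partner of `p` in a marriage of the original participants, so that
the partner of `p` in the extension is `castAdd q`, or `natAdd p` if `p` is single. -/
theorem exists_listPref_of_extL_pref {R : Fin n → Prop} (hR : ∀ q, R q → q ∈ L p)
    (hsingle : (∀ q, ¬ R q) → listPref (extL n L (Fin.castAdd n p)) y (Fin.natAdd n p))
    (hmarried : ∀ q, R q → listPref (extL n L (Fin.castAdd n p)) y (Fin.castAdd n q)) :
    ∃ q, y = Fin.castAdd n q ∧ q ∈ L p ∧ ∀ q', R q' → listPref (L p) q q' := by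
  by_cases hR' : ∃ q₀, R q₀
  · obtain ⟨q₀, hq₀⟩ := hR'
    induction y using Fin.addCases with
    | left q =>
      have hq := (extL_castAdd_pref_castAdd_iff (hR q₀ hq₀)).1 (hmarried q₀ hq₀)
      exact ⟨q, rfl, hq.1,
        fun q' hq' => (extL_castAdd_pref_castAdd_iff (hR q' hq')).1 (hmarried q' hq')⟩
    | right k =>
      exact (listPref_asymm (extL_castAdd_pref_natAdd (hR q₀ hq₀) k) (hmarried q₀ hq₀)).elim
  · replace hR' := not_exists.1 hR'
    induction y using Fin.addCases with
    | left q =>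
      exact ⟨q, rfl, extL_castAdd_pref_natAdd_self_iff.1 (hsingle hR'),
        fun q' hq' => absurd hq' (hR' q')⟩
    | right k => exact absurd (hsingle hR') (not_extL_castAdd_pref_natAdd_natAdd_self k)

theorem extL_castAdd_pref_of_forall (hq : q ∈ L p)
    (h : ∀ q', y = Fin.castAdd n q' → q' ∈ L p ∧ listPref (L p) q q') :
    listPref (extL n L (Fin.castAdd n p)) (Fin.castAdd n q) y := by
  induction y using Fin.addCases with
  | left q' =>
    obtain ⟨hq', hpref⟩ := h q' rfl
    exact (extL_castAdd_pref_castAdd_iff hq').2 hpref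
  | right k => exact extL_castAdd_pref_natAdd hq k

end ExtL

section Extension

variable {n : ℕ} (μ : Fin n → Option (Fin n))

def marriedWomen : Finset (Fin n) := Finset.univ.filter fun i => (μ i).isSome

def marriedMen : Finset (Fin n) := Finset.univ.filter fun j => ∃ i, μ i = some j

variable {μ}

theorem card_marriedWomen_eq_card_marriedMen (hμ : IsMarriage μ) :
    (marriedWomen μ).card = (marriedMen μ).card := by
  refine Finset.card_bij (fun i hi => (μ i).get (by simpa [marriedWomen] using hi))
    (fun i _ => by simp [marriedMen]) (fun i _ i' _ h => ?_) (fun j hj => ?_)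
  · exact hμ i i' _ (Option.some_get _).symm (by rw [h]; exact (Option.some_get _).symm)
  · obtain ⟨i, hi⟩ := by simpa [marriedMen] using hj
    exact ⟨i, by simp [marriedWomen, hi], by simp [hi]⟩

theorem nonempty_orderIso_marriedMen_marriedWomen (hμ : IsMarriage μ) :
    Nonempty (marriedMen μ ≃o marriedWomen μ) :=
  ⟨((marriedMen μ).orderIsoOfFin rfl).symm.trans
    ((marriedWomen μ).orderIsoOfFin (card_marriedWomen_eq_card_marriedMen hμ))⟩

variable (μ)

def extPartner (e : marriedMen μ ≃o marriedWomen μ) : Fin (n + n) → Fin (n + n) :=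
  Fin.append (fun i => (μ i).elim (Fin.natAdd n i) (Fin.castAdd n))
    fun k => if h : k ∈ marriedMen μ then Fin.natAdd n (e ⟨k, h⟩) else Fin.castAdd n k

variable {μ} (e : marriedMen μ ≃o marriedWomen μ) {i j k : Fin n}

theorem extPartner_castAdd_of_eq_some (h : μ i = some j) :
    extPartner μ e (Fin.castAdd n i) = Fin.castAdd n j := by
  rw [extPartner, Fin.append_left, h, Option.elim_some]

theorem extPartner_castAdd_of_eq_none (h : μ i = none) :
    extPartner μ e (Fin.castAdd n i) = Fin.natAdd n i := by
  rw [extPartner, Fin.append_left, h, Option.elim_none]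

theorem extPartner_natAdd_of_mem (h : k ∈ marriedMen μ) :
    extPartner μ e (Fin.natAdd n k) = Fin.natAdd n (e ⟨k, h⟩) := by
  rw [extPartner, Fin.append_right, dif_pos h]

theorem extPartner_natAdd_of_notMem (h : k ∉ marriedMen μ) :
    extPartner μ e (Fin.natAdd n k) = Fin.castAdd n k := by
  rw [extPartner, Fin.append_right, dif_neg h]

theorem extPartner_surjective : Surjective (extPartner μ e) := by
  intro y
  induction y using Fin.addCases with
  | left j =>
    by_cases hj : j ∈ marriedMen μ
    · obtain ⟨i, hi⟩ := by simpa [marriedMen] using hj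
      exact ⟨_, extPartner_castAdd_of_eq_some e hi⟩
    · exact ⟨_, extPartner_natAdd_of_notMem e hj⟩
  | right b =>
    by_cases hb : b ∈ marriedWomen μ
    · refine ⟨Fin.natAdd n (e.symm ⟨b, hb⟩), ?_⟩
      rw [extPartner_natAdd_of_mem e (e.symm ⟨b, hb⟩).2, Subtype.coe_eta, e.apply_symm_apply]
    · exact ⟨_, extPartner_castAdd_of_eq_none e (by simpa [marriedWomen] using hb)⟩

theorem extPartner_injective : Injective (extPartner μ e) :=
  Finite.injective_iff_surjective.2 (extPartner_surjective e)

theorem extPartner_castAdd_eq_castAdd_iff :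
    extPartner μ e (Fin.castAdd n i) = Fin.castAdd n j ↔ μ i = some j := by
  refine ⟨fun h => ?_, extPartner_castAdd_of_eq_some e⟩
  cases hi : μ i with
  | none =>
    rw [extPartner_castAdd_of_eq_none e hi] at h
    exact absurd h.symm (Fin.castAdd_ne_natAdd j i)
  | some j' =>
    rw [extPartner_castAdd_of_eq_some e hi, Fin.castAdd_inj] at h
    rw [h]

end Extension

section Stability

variable {n : ℕ} {wL mL : Fin n → List (Fin n)} {μ : Fin n → Option (Fin n)}
  (e : marriedMen μ ≃o marriedWomen μ)

theorem exists_of_extL_pref_extPartner_castAdd {i : Fin n} {y : Fin (n + n)}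
    (hIR : ∀ j, μ i = some j → j ∈ wL i)
    (h : listPref (extL n wL (Fin.castAdd n i)) y (extPartner μ e (Fin.castAdd n i))) :
    ∃ j, y = Fin.castAdd n j ∧ j ∈ wL i ∧ ∀ j', μ i = some j' → listPref (wL i) j j' :=
  exists_listPref_of_extL_pref hIR
    (fun hi => by
      rwa [← extPartner_castAdd_of_eq_none e (Option.eq_none_iff_forall_ne_some.2 hi)])
    (fun _ hj => by rwa [← extPartner_castAdd_of_eq_some e hj])

theorem exists_of_forall_extL_pref_extPartner_eq_castAdd {j : Fin n} {x : Fin (n + n)}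
    (hIR : ∀ i, μ i = some j → i ∈ mL j)
    (h : ∀ x', extPartner μ e x' = Fin.castAdd n j →
      listPref (extL n mL (Fin.castAdd n j)) x x') :
    ∃ i, x = Fin.castAdd n i ∧ i ∈ mL j ∧ ∀ i', μ i' = some j → listPref (mL j) i i' :=
  exists_listPref_of_extL_pref hIR
    (fun hj => h _ (extPartner_natAdd_of_notMem e (by simpa [marriedMen] using hj)))
    (fun _ hi => h _ (extPartner_castAdd_of_eq_some e hi))

theorem not_extL_pref_extPartner_natAdd (k b : Fin n)
    (hk : listPref (extL n wL (Fin.natAdd n k)) (Fin.natAdd n b) (extPartner μ e (Fin.natAdd n k)))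
    (hb : ∀ x', extPartner μ e x' = Fin.natAdd n b →
      listPref (extL n mL (Fin.natAdd n b)) (Fin.natAdd n k) x') : False := by
  by_cases hkM : k ∈ marriedMen μ
  · rw [extPartner_natAdd_of_mem e hkM, extL_natAdd_pref_natAdd_iff] at hk
    by_cases hbW : b ∈ marriedWomen μ
    · set k' := e.symm ⟨b, hbW⟩
      have hk' := hb _ <| by
        rw [extPartner_natAdd_of_mem e k'.2, Subtype.coe_eta, e.apply_symm_apply]
      rw [extL_natAdd_pref_natAdd_iff] at hk'
      have hlt : e ⟨k, hkM⟩ < e k' := e.lt_iff_lt.2 hk'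
      rw [e.apply_symm_apply] at hlt
      exact lt_asymm hk hlt
    · exact not_extL_natAdd_pref_castAdd_self _
        (hb _ (extPartner_castAdd_of_eq_none e (by simpa [marriedWomen] using hbW)))
  · rw [extPartner_natAdd_of_notMem e hkM] at hk
    exact not_extL_natAdd_pref_castAdd_self _ hk

theorem stableL_extL_extPartner (hst : StableL wL mL μ) :
    StableL (extL n wL) (extL n mL) fun x => some (extPartner μ e x) := by
  refine ⟨fun x y _ => ⟨mem_extL _ _ _, mem_extL _ _ _⟩, ?_⟩
  rintro ⟨x, y, -, -, hx, hy⟩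
  simp only [Option.some_inj, forall_eq'] at hx hy
  induction x using Fin.addCases with
  | left i =>
    obtain ⟨j, rfl, hjw, hw⟩ :=
      exists_of_extL_pref_extPartner_castAdd e (fun j hj => (hst.1 i j hj).1) hx
    obtain ⟨i', hi', him, hm⟩ :=
      exists_of_forall_extL_pref_extPartner_eq_castAdd e (fun i hi => (hst.1 i j hi).2) hy
    rw [Fin.castAdd_inj] at hi'
    exact hst.2 ⟨i, j, hjw, hi' ▸ him, hw, hi' ▸ hm⟩
  | right k =>
    induction y using Fin.addCases with
    | left j =>
      obtain ⟨i, hi, -⟩ :=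
        exists_of_forall_extL_pref_extPartner_eq_castAdd e (fun i hi => (hst.1 i j hi).2) hy
      exact Fin.castAdd_ne_natAdd i k hi.symm
    | right b => exact not_extL_pref_extPartner_natAdd e k b hx hy

end Stability

section Restriction

variable {n : ℕ} {wL mL : Fin n → List (Fin n)} {μ'' : Fin (n + n) → Option (Fin (n + n))}
  {i j : Fin n}

theorem mem_of_stableL_extL_left (hst : StableL (extL n wL) (extL n mL) μ'')
    (h : μ'' (Fin.castAdd n i) = some (Fin.castAdd n j)) : j ∈ wL i := by
  by_contra hj
  refine hst.2 ⟨Fin.castAdd n i, Fin.natAdd n i, mem_extL _ _ _, mem_extL _ _ _,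
    fun y hy => ?_, fun x hx => extL_natAdd_pref_castAdd_self ?_⟩
  · obtain rfl : Fin.castAdd n j = y := Option.some_inj.1 (h ▸ hy)
    exact extL_castAdd_pref_natAdd_self_castAdd hj
  · rintro rfl
    exact Fin.castAdd_ne_natAdd j i (Option.some_inj.1 (h ▸ hx))

theorem mem_of_stableL_extL_right (hμ'' : IsMarriage μ'')
    (hst : StableL (extL n wL) (extL n mL) μ'')
    (h : μ'' (Fin.castAdd n i) = some (Fin.castAdd n j)) : i ∈ mL j := by
  by_contra hi
  refine hst.2 ⟨Fin.natAdd n j, Fin.castAdd n j, mem_extL _ _ _, mem_extL _ _ _,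
    fun y hy => extL_natAdd_pref_castAdd_self ?_, fun x hx => ?_⟩
  · rintro rfl
    exact Fin.castAdd_ne_natAdd i j (hμ'' _ _ _ h hy)
  · obtain rfl := hμ'' _ _ _ hx h
    exact extL_castAdd_pref_natAdd_self_castAdd hi

theorem stableL_of_stableL_extL {μ : Fin n → Option (Fin n)} (hμ'' : IsMarriage μ'')
    (hst : StableL (extL n wL) (extL n mL) μ'')
    (hsub : ∀ i j, μ i = some j ↔ μ'' (Fin.castAdd n i) = some (Fin.castAdd n j)) :
    StableL wL mL μ := by
  have hIR : ∀ i j, μ i = some j → j ∈ wL i ∧ i ∈ mL j := fun i j h =>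
    ⟨mem_of_stableL_extL_left hst ((hsub i j).1 h),
      mem_of_stableL_extL_right hμ'' hst ((hsub i j).1 h)⟩
  refine ⟨hIR, fun ⟨i, j, hjw, him, hw, hm⟩ => hst.2 ⟨Fin.castAdd n i, Fin.castAdd n j,
    mem_extL _ _ _, mem_extL _ _ _, fun y hy => extL_castAdd_pref_of_forall hjw ?_,
    fun x hx => extL_castAdd_pref_of_forall him ?_⟩⟩
  · rintro j' rfl
    have hj' := (hsub i j').2 hy
    exact ⟨(hIR i j' hj').1, hw j' hj'⟩
  · rintro i' rfl
    have hi' := (hsub i' j).2 hx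
    exact ⟨(hIR i' j hi').2, hm i' hi'⟩

end Restriction

theorem stable_iff_submarriage_of_stable_full_general (n : ℕ)
    (wL : Fin n → List (Fin n)) (mL : Fin n → List (Fin n))
    (μ : Fin n → Option (Fin n)) (hμ : IsMarriage μ) :
    StableL wL mL μ ↔
      ∃ μ'' : Fin (n + n) → Option (Fin (n + n)),
        IsMarriage μ'' ∧ (∀ i, (μ'' i).isSome) ∧ (∀ j, ∃ i, μ'' i = some j) ∧
        StableL (extL n wL) (extL n mL) μ'' ∧
        (∀ i j : Fin n, μ i = some j ↔ μ'' (Fin.castAdd n i) = some (Fin.castAdd n j)) := by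
  refine ⟨fun hst => ?_,
    fun ⟨μ'', hμ'', _, _, hst'', hsub⟩ => stableL_of_stableL_extL hμ'' hst'' hsub⟩
  obtain ⟨e⟩ := nonempty_orderIso_marriedMen_marriedWomen hμ
  refine ⟨fun x => some (extPartner μ e x), fun x x' y hx hx' => ?_, fun _ => rfl,
    fun y => ?_, stableL_extL_extPartner e hst,
    fun i j => by rw [Option.some_inj, extPartner_castAdd_eq_castAdd_iff]⟩
  · exact extPartner_injective e (Option.some_inj.1 (hx.trans hx'.symm))
  · obtain ⟨x, hx⟩ := extPartner_surjective e y
    exact ⟨x, congrArg some hx⟩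

/-- A marriage `μ` between `W` and `M` (with possibly-partial preference profiles
`wL`, `mL`, each list duplicate-free) is stable if and only if `μ` is a
submarriage of some perfect marriage `μ''` between `W ∪ W'` and `M ∪ M'` that is
stable with respect to the constructed full preference lists. -/
theorem stable_iff_submarriage_of_stable_full (n : ℕ)
    (wL : Fin n → List (Fin n)) (mL : Fin n → List (Fin n))
    (hw : ∀ i, (wL i).Nodup) (hm : ∀ j, (mL j).Nodup)
    (μ : Fin n → Option (Fin n)) (hμ : IsMarriage μ) :
    StableL wL mL μ ↔
      ∃ μ'' : Fin (n + n) → Option (Fin (n + n)),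
        IsMarriage μ'' ∧ (∀ i, (μ'' i).isSome) ∧ (∀ j, ∃ i, μ'' i = some j) ∧
        StableL (extL n wL) (extL n mL) μ'' ∧
        (∀ i j : Fin n, μ i = some j ↔ μ'' (Fin.castAdd n i) = some (Fin.castAdd n j)) :=
  stable_iff_submarriage_of_stable_full_general n wL mL μ hμ
end

section
/- Consider the three-tier construction with parameter δ and Boolean vectors x, y, and suppose the instance is disjoint, i.e., no pair (i, j) has x^i_j = y^i_j = 1. Then in every stable perfect marriage μ for these preference lists, no woman w_i with i ≤ n/2 is married to a man m_j with j ≤ n/2; consequently every high or mid woman is married to a low man, and every high or mid man is married to a low woman. -/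
/-- In the three-tier construction with a disjoint instance (no pair of high
indices `(i, j)` has `x^i_j = y^i_j = 1`), in every stable perfect marriage no
woman with 0-indexed index `< k = n/2` (i.e. no high or mid woman) is married to
a man with index `< k`; consequently every high or mid woman is married to a low
man, and every high or mid man is married to a low woman. -/
theorem tier_disjoint_high_mid_marry_low (n k h : ℕ) (δ : ℝ) (x y : ℕ → ℕ → Bool)
    (hn : n = 2 * k) (hδ0 : 0 < δ) (hδ1 : δ ≤ 1)
    (hh : (h : ℝ) = δ * n / 2) (hhk : h ≤ k)
    (hdisj : ¬∃ i j : ℕ, i < h ∧ j < h ∧ x i j = true ∧ y i j = true) :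
    ∀ μ : Fin n → Fin n,
      StableFull n (tierWRank n k h x) (tierMRank n k h y) μ →
      ∀ i : Fin n, (i.val < k → k ≤ (μ i).val) ∧ ((μ i).val < k → k ≤ i.val) := by
  intro μ hμ
  rcases Nat.eq_zero_or_pos k with hk0 | hkpos
  · intro i; exact absurd i.isLt (by omega)
  have hkn : k < n := by omega
  have main : ∀ i : Fin n, i.val < k → k ≤ (μ i).val := by
    by_contra hc
    push_neg at hc
    obtain ⟨i, hik, hjk⟩ := hc
    by_cases hex : ∃ i0 : Fin n, k ≤ i0.val ∧ k ≤ (μ i0).val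
    · obtain ⟨i0, hi0, hj0⟩ := hex
      set a := i.val with ha
      set b := (μ i).val with hb
      set a0 := i0.val with ha0
      set b0 := (μ i0).val with hb0
      have hbn : b < n := (μ i).isLt
      have hb0n : b0 < n := (μ i0).isLt
      have ha0n : a0 < n := i0.isLt
      by_cases hA : a < h ∧ b < h ∧ x a b = true
      · -- high woman married to an x-partner; man prefers a low woman (y a b = false)
        have hy : y a b = false := by
          rcases Bool.eq_false_or_eq_true (y a b) with h' | h'
          · exact absurd ⟨a, b, hA.1, hA.2.1, hA.2.2, h'⟩ hdisj
          · exact h'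
        refine absurd ?_ (hμ.2 i0 i)
        constructor
        · -- woman i0 (low) prefers man b over her spouse b0
          have e1 : tierWRank n k h x a0 b = b := by simp [tierWRank, hi0]
          have e2 : tierWRank n k h x a0 b0 = b0 := by simp [tierWRank, hi0]
          rw [← ha0, ← hb, ← hb0, e1, e2]; omega
        · -- man b (high) prefers woman i0 over his spouse i
          have hnb1 : ¬ k ≤ b := by omega
          have hnb2 : ¬ h ≤ b := by omega
          have hna0 : ¬ a0 < h := by omega
          have hna : ¬ k ≤ a := by omega
          have hnah : ¬ h ≤ a := by omega
          have e3 : tierMRank n k h y b a0 = 1 * n + a0 := by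
            simp [tierMRank, hnb1, hnb2, hna0, hi0]
          have e4 : tierMRank n k h y b a = 3 * n + a := by
            simp [tierMRank, hnb1, hnb2, hy, hna, hnah]
          rw [← ha0, ← ha, ← hb, e3, e4]; omega
      · -- woman i prefers the low man b0 over her spouse b
        refine absurd ?_ (hμ.2 i i0)
        have hnb0h : ¬ b0 < h := by omega
        have hb0k : k ≤ b0 := hj0
        constructor
        · have hna : ¬ k ≤ a := by omega
          by_cases hah : h ≤ a
          · -- mid woman
            have hnb : ¬ k ≤ b := by omega
            have e1 : tierWRank n k h x a b0 = b0 - k := by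
              simp [tierWRank, hna, hah, hb0k]
            have e2 : tierWRank n k h x a b = b + k := by
              simp [tierWRank, hna, hah, hnb]
            rw [← ha, ← hb, ← hb0, e1, e2]; omega
          · -- high woman, not an x-partner
            have hAB : ¬ (b < h ∧ x a b = true) := by
              intro hc; exact hA ⟨by omega, hc⟩
            have hnb : ¬ k ≤ b := by omega
            have e1 : tierWRank n k h x a b0 = 1 * n + b0 := by
              simp [tierWRank, hna, hah, hnb0h, hb0k]
            have e2 : tierWRank n k h x a b =
                (if h ≤ b then 2 else 3) * n + b := by
              simp [tierWRank, hna, hah, hAB, hnb]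
            rw [← ha, ← hb, ← hb0, e1, e2]
            by_cases hbh : h ≤ b <;> simp [hbh] <;> omega
        · -- low man b0 prefers woman i over his spouse i0
          have e3 : tierMRank n k h y b0 a = a := by simp [tierMRank, hb0k]
          have e4 : tierMRank n k h y b0 a0 = a0 := by simp [tierMRank, hb0k]
          rw [← ha, ← ha0, ← hb0, e3, e4]; omega
    · -- counting contradiction: every low woman also married high/mid
      push_neg at hex
      have hinj := hμ.1.injective
      have hmaps : ∀ a ∈ insert i (Finset.univ.filter fun a : Fin n => k ≤ a.val),
          μ a ∈ (Finset.univ.filter fun b : Fin n => b.val < k) := by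
        intro a ha
        simp only [Finset.mem_insert, Finset.mem_filter, Finset.mem_univ,
          true_and] at ha ⊢
        rcases ha with rfl | ha
        · exact hjk
        · exact hex a ha
      have hcard := Finset.card_le_card_of_injOn μ hmaps hinj.injOn
      have h1 : (insert i (Finset.univ.filter fun a : Fin n => k ≤ a.val)).card
          = (Finset.univ.filter fun a : Fin n => k ≤ a.val).card + 1 := by
        rw [Finset.card_insert_of_notMem]
        simp only [Finset.mem_filter, Finset.mem_univ, true_and]
        omega
      have h2 : (Finset.univ.filter fun a : Fin n => k ≤ a.val)
          = Finset.Ici (⟨k, hkn⟩ : Fin n) := by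
        ext a; simp [Fin.le_def]
      have h3 : (Finset.univ.filter fun b : Fin n => b.val < k)
          = Finset.Iio (⟨k, hkn⟩ : Fin n) := by
        ext a; simp [Fin.lt_def]
      rw [h1, h2] at hcard
      rw [h3] at hcard
      rw [Fin.card_Ici, Fin.card_Iio] at hcard
      simp only [Fin.val_mk] at hcard
      omega
  intro i
  refine ⟨main i, fun hμi => ?_⟩
  by_contra hik
  push_neg at hik
  have := main i hik
  omega
end

section
/- Fix 0 < δ ≤ 1 and n ∈ ℕ such that n/2 and δn/2 are integers, and fix indices 1 ≤ α, β ≤ δn/2. Let μ₁ = {(w_{i+n/2}, m_i) : 1 ≤ i ≤ n/2} ∪ {(w_i, m_{i+n/2}) : 1 ≤ i ≤ n/2} and μ₀ = {(w_α, m_β)} ∪ {(w_i, m_{i+n/2}) : i < α} ∪ {(w_{i+n/2}, m_i) : i < β} ∪ {(w_i, m_{i+n/2−1}) : α < i ≤ n/2} ∪ {(w_{i+n/2−1}, m_i) : β < i ≤ n/2} ∪ {(w_n, m_n)}. Then: (1) every mid woman w_i with δn/2 < i ≤ n/2 and every mid man m_j with δn/2 < j ≤ n/2 has a different spouse in μ₀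 than in μ₁; and (2) in neither μ₀ nor μ₁ is any mid woman married to a mid man. -/
/-- With `n = 2 * k`, `h = δn/2 ≤ k`, and 0-indexed intersection indices
`a, b < h`: (1) every mid woman (0-indexed index in `[h, k)`) and every mid man
has a different spouse in `μ₀` than in `μ₁` (for the men: the women married to a
mid man in `μ₀` and in `μ₁` are distinct); and (2) in neither `μ₀` nor `μ₁` is
any mid woman married to a mid man. -/
theorem mid_spouses_differ_and_no_mid_mid (n k h a b : ℕ) (δ : ℝ)
    (hn : n = 2 * k) (hδ0 : 0 < δ) (hδ1 : δ ≤ 1)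
    (hh : (h : ℝ) = δ * n / 2) (hhk : h ≤ k)
    (ha : a < h) (hb : b < h) :
    (∀ i : Fin n, h ≤ i.val → i.val < k → muZero n k a b i ≠ muOne n k i) ∧
    (∀ j u u' : Fin n, h ≤ j.val → j.val < k →
        muZero n k a b u = j → muOne n k u' = j → u ≠ u') ∧
    (∀ i : Fin n, h ≤ i.val → i.val < k →
        ¬(h ≤ (muZero n k a b i).val ∧ (muZero n k a b i).val < k)) ∧
    (∀ i : Fin n, h ≤ i.val → i.val < k →
        ¬(h ≤ (muOne n k i).val ∧ (muOne n k i).val < k)) := by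
  subst hn
  have key : ∀ u : ℕ, u < 2 * k → muZeroVal k a b u % (2 * k) = muZeroVal k a b u := by
    intro u hu
    apply Nat.mod_eq_of_lt
    unfold muZeroVal
    split_ifs <;> omega
  have hone : ∀ x : ℕ, x < 2 * k → (x + k) % (2 * k) = if x < k then x + k else x - k := by
    intro x hx
    by_cases hxk : x < k
    · rw [Nat.mod_eq_of_lt (by omega)]; simp [hxk]
    · rw [Nat.mod_eq_sub_mod (by omega), Nat.mod_eq_of_lt (by omega)]
      simp [hxk]; omega
  refine ⟨?_, ?_, ?_, ?_⟩
  · intro i hi1 hi2 hEq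
    have h' := congrArg Fin.val hEq
    simp only [muZero, muOne] at h'
    rw [key _ i.isLt, hone _ i.isLt] at h'
    unfold muZeroVal at h'
    split_ifs at h' <;> omega
  · intro j u u' hj1 hj2 h0 h1 heq
    subst heq
    have h0' := congrArg Fin.val h0
    have h1' := congrArg Fin.val h1
    simp only [muZero, muOne] at h0' h1'
    rw [key _ u.isLt] at h0'
    rw [hone _ u.isLt] at h1'
    unfold muZeroVal at h0'
    split_ifs at h0' h1' <;> omega
  · rintro i hi1 hi2 ⟨hc1, hc2⟩
    simp only [muZero] at hc1 hc2
    rw [key _ i.isLt] at hc1 hc2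
    unfold muZeroVal at hc1 hc2
    split_ifs at hc1 hc2 <;> omega
  · rintro i hi1 hi2 ⟨hc1, hc2⟩
    simp only [muOne] at hc1 hc2
    rw [hone _ i.isLt] at hc1 hc2
    split_ifs at hc1 hc2 <;> omega
end
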